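/- arXiv:2212.12528 — 4 statements merged into one kernel-verified Lean document; each statement's English description precedes it below -/
import Mathlib

section
/- (Upper bound of Hua–Huang–Wang via the Escobar-type Cheeger constant.) Let G=(V,E) be a locally finite simple graph and let Ω⊆V be a finite connected set of vertices whose vertex boundary B=δΩ has at least 2 elements, with associated graph with boundary (Ω̄,E'). Then σ₁(Ω̄) ≤ 2·h_E(Ω̄). -/
/-! Discrete Steklov eigenvalues of graphs with boundary. -/

namespace DiscreteSteklov

variable {V : Type*}

/-- The squared difference of a function `u` across an unordered edge. -/
noncomputable def edgeEnergy (u : V → ℝ) : Sym2 V → ℝ :=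
  Sym2.lift ⟨fun i j => (u i - u j) ^ 2, by intro i j; ring⟩

/-- The Dirichlet energy of `u` with respect to the edge set `E'`. -/
noncomputable def energy (E' : Set (Sym2 V)) (u : V → ℝ) : ℝ :=
  ∑ᶠ e ∈ E', edgeEnergy u e

/-- The squared `L²` norm of `u` on the boundary `B`. -/
noncomputable def boundaryNorm (B : Set V) (u : V → ℝ) : ℝ :=
  ∑ᶠ i ∈ B, u i ^ 2

/-- The space of real-valued functions on `S`, realised as the subspace of
functions on `V` vanishing outside of `S`. -/
def funcsOn (S : Set V) : Submodule ℝ (V → ℝ) where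
  carrier := {u | ∀ v ∉ S, u v = 0}
  add_mem' := by
    intro a b ha hb v hv
    simp [ha v hv, hb v hv]
  zero_mem' := fun v _ => rfl
  smul_mem' := by
    intro c a ha v hv
    simp [ha v hv]

/-- Restriction of functions to the boundary `B`, as a linear map. -/
def restrictTo (B : Set V) : (V → ℝ) →ₗ[ℝ] (↥B → ℝ) :=
  LinearMap.funLeft ℝ ℝ (Subtype.val : ↥B → V)

/-- The `k`-th min-max Steklov eigenvalue of the graph with boundary having
vertex set `Ωbar`, edge set `E'` and boundary `B`: the minimum over all
`(k+1)`-dimensional subspaces `F` of functions on `Ωbar` whose space of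
restrictions to `B` is also `(k+1)`-dimensional, of the maximum of the
Rayleigh quotient over members of `F` whose restriction to `B` is not
identically `0`. -/
noncomputable def steklov (E' : Set (Sym2 V)) (Ωbar B : Set V) (k : ℕ) : ℝ :=
  sInf { t : ℝ | ∃ F : Submodule ℝ (V → ℝ), F ≤ funcsOn Ωbar ∧
    Module.finrank ℝ ↥F = k + 1 ∧
    Module.finrank ℝ ↥(F.map (restrictTo B)) = k + 1 ∧
    t = sSup { r : ℝ | ∃ u ∈ F, restrictTo B u ≠ 0 ∧
      r = energy E' u / boundaryNorm B u } }

/-- The vertex boundary `δΩ` of a set `Ω` of vertices of `G`. -/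
def vertexBoundary (G : SimpleGraph V) (Ω : Set V) : Set V :=
  {i | i ∉ Ω ∧ ∃ j ∈ Ω, G.Adj j i}

/-- The set of edges of `G` with at least one endpoint in `Ω`. -/
def incidentEdges (G : SimpleGraph V) (Ω : Set V) : Set (Sym2 V) :=
  {e | e ∈ G.edgeSet ∧ ∃ v ∈ Ω, v ∈ e}

/-- The edge boundary `∂_Ω A`: edges of `E'` with exactly one endpoint in `A`. -/
def edgeBoundary (E' : Set (Sym2 V)) (A : Set V) : Set (Sym2 V) :=
  {e | e ∈ E' ∧ ∃ i j : V, e = s(i, j) ∧ i ∈ A ∧ j ∉ A}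

/-- The Escobar-type Cheeger constant `h_E(Ω̄)`. -/
noncomputable def escobarConst (E' : Set (Sym2 V)) (Ωbar B : Set V) : ℝ :=
  sInf { r : ℝ | ∃ A : Set V, A ⊆ Ωbar ∧ (A ∩ B).Nonempty ∧
    ((A ∩ B).ncard : ℝ) ≤ (B.ncard : ℝ) / 2 ∧
    r = ((edgeBoundary E' A).ncard : ℝ) / ((A ∩ B).ncard : ℝ) }

end DiscreteSteklov

open DiscreteSteklov


private lemma rayleigh_bound (a b c m n : ℝ) (hc : 0 ≤ c) (hm : 0 < m) (hmn : m ≤ n)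
    (hden : 0 < a ^ 2 * m + b ^ 2 * n) :
    (a - b) ^ 2 * c / (a ^ 2 * m + b ^ 2 * n) ≤ 2 * (c / m) := by
  rw [show 2 * (c / m) = (2 * c) / m by ring, div_le_div_iff₀ hden hm]
  nlinarith [mul_nonneg (mul_nonneg hc hm.le) (sq_nonneg (a + b)),
    mul_nonneg (mul_nonneg hc (sq_nonneg b)) (sub_nonneg.mpr hmn)]

/-- Upper bound of Hua–Huang–Wang via the Escobar-type Cheeger constant:
`σ₁(Ω̄) ≤ 2 · h_E(Ω̄)`. -/
theorem steklov_le_escobar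
    {V : Type*} (G : SimpleGraph V)
    (hlf : ∀ v : V, (G.neighborSet v).Finite)
    (Ω : Set V) (hΩfin : Ω.Finite) (hΩne : Ω.Nonempty)
    (hΩconn : (G.induce Ω).Connected)
    (hB : 2 ≤ (vertexBoundary G Ω).ncard) :
    steklov (incidentEdges G Ω) (Ω ∪ vertexBoundary G Ω) (vertexBoundary G Ω) 1 ≤
      2 * escobarConst (incidentEdges G Ω) (Ω ∪ vertexBoundary G Ω) (vertexBoundary G Ω) := by
  classical
  set B := vertexBoundary G Ω with hBdef
  set Ωb := Ω ∪ B with hΩbdef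
  set E' := incidentEdges G Ω with hE'def
  -- basic finiteness
  have hBfin : B.Finite := by
    have hsub : B ⊆ ⋃ v ∈ Ω, G.neighborSet v := by
      rintro i ⟨hiΩ, j, hjΩ, hadj⟩
      exact Set.mem_biUnion hjΩ hadj
    exact (Set.Finite.biUnion hΩfin fun v _ => hlf v).subset hsub
  have hΩbfin : Ωb.Finite := hΩfin.union hBfin
  have hBsub : B ⊆ Ωb := Set.subset_union_right
  have hend : ∀ i j : V, s(i,j) ∈ E' → i ∈ Ωb ∧ j ∈ Ωb := by
    rintro i j ⟨hedge, v, hvΩ, hve⟩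
    rw [SimpleGraph.mem_edgeSet] at hedge
    have hcl : ∀ x y : V, G.Adj x y → x ∈ Ω → y ∈ Ωb := by
      intro x y hxy hx
      by_cases hy : y ∈ Ω
      · exact Or.inl hy
      · exact Or.inr ⟨hy, x, hx, hxy⟩
    rcases Sym2.mem_iff.mp hve with rfl | rfl
    · exact ⟨Or.inl hvΩ, hcl _ _ hedge hvΩ⟩
    · exact ⟨hcl _ _ hedge.symm hvΩ, Or.inl hvΩ⟩
  have hE'fin : E'.Finite := by
    have hsub : E' ⊆ (fun p : V × V => s(p.1, p.2)) '' (Ωb ×ˢ Ωb) := by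
      intro e he
      induction e using Sym2.ind with
      | _ i j =>
        obtain ⟨hi, hj⟩ := hend i j he
        exact ⟨(i, j), ⟨hi, hj⟩, rfl⟩
    exact ((hΩbfin.prod hΩbfin).image _).subset hsub
  -- the Escobar constant is attained
  have hBpos : 0 < B.ncard := by omega
  obtain ⟨b0, hb0⟩ : B.Nonempty := Set.nonempty_of_ncard_ne_zero (by omega)
  have hScast : (2 : ℝ) ≤ (B.ncard : ℝ) := by exact_mod_cast hB
  have hSne : { r : ℝ | ∃ A : Set V, A ⊆ Ωb ∧ (A ∩ B).Nonempty ∧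
      ((A ∩ B).ncard : ℝ) ≤ (B.ncard : ℝ) / 2 ∧
      r = ((edgeBoundary E' A).ncard : ℝ) / ((A ∩ B).ncard : ℝ) }.Nonempty := by
    refine ⟨_, {b0}, Set.singleton_subset_iff.mpr (hBsub hb0), ?_, ?_, rfl⟩
    · exact ⟨b0, rfl, hb0⟩
    · have : ({b0} ∩ B : Set V) = {b0} :=
        Set.inter_eq_self_of_subset_left (Set.singleton_subset_iff.mpr hb0)
      rw [this, Set.ncard_singleton]
      push_cast
      linarith
  have hSfin : { r : ℝ | ∃ A : Set V, A ⊆ Ωb ∧ (A ∩ B).Nonempty ∧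
      ((A ∩ B).ncard : ℝ) ≤ (B.ncard : ℝ) / 2 ∧
      r = ((edgeBoundary E' A).ncard : ℝ) / ((A ∩ B).ncard : ℝ) }.Finite := by
    have himg : { r : ℝ | ∃ A : Set V, A ⊆ Ωb ∧ (A ∩ B).Nonempty ∧
        ((A ∩ B).ncard : ℝ) ≤ (B.ncard : ℝ) / 2 ∧
        r = ((edgeBoundary E' A).ncard : ℝ) / ((A ∩ B).ncard : ℝ) } ⊆
        (fun A : Set V => ((edgeBoundary E' A).ncard : ℝ) / ((A ∩ B).ncard : ℝ)) ''
          { A : Set V | A ⊆ Ωb } := by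
      rintro r ⟨A, hA1, -, -, rfl⟩
      exact ⟨A, hA1, rfl⟩
    exact ((hΩbfin.finite_subsets).image _).subset himg
  have hmin := hSne.csInf_mem hSfin
  obtain ⟨A, hAsub, hAne, hAhalf, hAeq⟩ := hmin
  have hEsc : escobarConst E' Ωb B =
      ((edgeBoundary E' A).ncard : ℝ) / ((A ∩ B).ncard : ℝ) := hAeq
  -- notation
  set c : ℝ := ((edgeBoundary E' A).ncard : ℝ) with hcdef
  set m : ℝ := (((A ∩ B).ncard : ℕ) : ℝ) with hmdef
  set n : ℝ := (((B \ A).ncard : ℕ) : ℝ) with hndef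
  have hABfin : (A ∩ B).Finite := hBfin.subset Set.inter_subset_right
  have hBAfin : (B \ A).Finite := hBfin.subset Set.diff_subset
  have hm : 0 < m := by
    rw [hmdef]
    exact_mod_cast (Set.ncard_pos hABfin).mpr hAne
  have hsum : m + n = (B.ncard : ℝ) := by
    have h := Set.ncard_inter_add_ncard_diff_eq_ncard B A hBfin
    rw [Set.inter_comm] at h
    rw [hmdef, hndef]
    exact_mod_cast h
  have hmn : m ≤ n := by linarith
  have hn : 0 < n := by linarith
  have hc : 0 ≤ c := Nat.cast_nonneg _
  obtain ⟨b1, hb1⟩ := hAne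
  obtain ⟨b2, hb2⟩ : (B \ A).Nonempty := by
    rw [← Set.ncard_pos hBAfin]
    have h2 : (0:ℝ) < (((B \ A).ncard : ℕ) : ℝ) := by rw [← hndef]; exact hn
    exact_mod_cast h2
  -- the test functions
  set f : V → ℝ := Set.indicator A (fun _ => 1) with hfdef
  set g : V → ℝ := Set.indicator (Ωb \ A) (fun _ => 1) with hgdef
  have hval : ∀ (a b : ℝ) (i : V), i ∈ Ωb → (a • f + b • g) i = if i ∈ A then a else b := by
    intro a b i hi
    by_cases hiA : i ∈ A
    · simp [hfdef, hgdef, Set.indicator_of_mem hiA,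
        Set.indicator_of_notMem (show i ∉ Ωb \ A from fun h => h.2 hiA), hiA]
    · simp [hfdef, hgdef, Set.indicator_of_notMem hiA,
        Set.indicator_of_mem (show i ∈ Ωb \ A from ⟨hi, hiA⟩), hiA]
  have hb1Ωb : b1 ∈ Ωb := hBsub hb1.2
  have hb2Ωb : b2 ∈ Ωb := hBsub hb2.1
  have heval : ∀ s t : ℝ, s • f + t • g = 0 → s = 0 ∧ t = 0 := by
    intro s t hst
    have h1 := congrFun hst b1
    have h2 := congrFun hst b2
    rw [hval s t b1 hb1Ωb, if_pos hb1.1] at h1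
    rw [hval s t b2 hb2Ωb, if_neg hb2.2] at h2
    exact ⟨h1, h2⟩
  have hfg_indep : LinearIndependent ℝ ![f, g] := LinearIndependent.pair_iff.mpr heval
  have hrange : Set.range ![f, g] = {f, g} := by
    ext x; simp [Fin.exists_fin_two, or_comm, eq_comm]
  set F : Submodule ℝ (V → ℝ) := Submodule.span ℝ {f, g} with hFdef
  -- restrictions
  set f' : (↥B → ℝ) := restrictTo B f with hf'def
  set g' : (↥B → ℝ) := restrictTo B g with hg'def
  have hres_apply : ∀ (u : V → ℝ) (x : ↥B), restrictTo B u x = u x := fun _ _ => rfl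
  have heval' : ∀ s t : ℝ, s • f' + t • g' = 0 → s = 0 ∧ t = 0 := by
    intro s t hst
    have h1 := congrFun hst ⟨b1, hb1.2⟩
    have h2 := congrFun hst ⟨b2, hb2.1⟩
    simp only [Pi.add_apply, Pi.smul_apply, smul_eq_mul, Pi.zero_apply, hf'def, hg'def,
      hres_apply] at h1 h2
    rw [hfdef, hgdef] at h1 h2
    rw [Set.indicator_of_mem hb1.1, Set.indicator_of_notMem (show b1 ∉ Ωb \ A from
      fun h => h.2 hb1.1)] at h1
    rw [Set.indicator_of_notMem hb2.2, Set.indicator_of_mem (show b2 ∈ Ωb \ A from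
      ⟨hb2Ωb, hb2.2⟩)] at h2
    constructor <;> [linarith [h1]; linarith [h2]]
  have hfg'_indep : LinearIndependent ℝ ![f', g'] := LinearIndependent.pair_iff.mpr heval'
  have hrange' : Set.range ![f', g'] = {f', g'} := by
    ext x; simp [Fin.exists_fin_two, or_comm, eq_comm]
  -- the components of membership in the Steklov min-max set
  have hFsub : F ≤ funcsOn Ωb := by
    rw [hFdef, Submodule.span_le]
    rintro x (rfl | rfl)
    · intro v hv
      exact Set.indicator_of_notMem (fun hvA => hv (hAsub hvA)) _
    · intro v hv
      exact Set.indicator_of_notMem (fun hvA => hv hvA.1) _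
  have hFrank : Module.finrank ℝ ↥F = 2 := by
    rw [hFdef, ← hrange, finrank_span_eq_card hfg_indep]
    simp
  have hmap : F.map (restrictTo B) = Submodule.span ℝ {f', g'} := by
    rw [hFdef, Submodule.map_span, Set.image_pair]
  have hFrank' : Module.finrank ℝ ↥(F.map (restrictTo B)) = 2 := by
    rw [hmap, ← hrange', finrank_span_eq_card hfg'_indep]
    simp
  -- energy and boundary norm of elements of F
  have hmemiff : ∀ i j : V, s(i,j) ∈ E' →
      (s(i,j) ∈ edgeBoundary E' A ↔ ((i ∈ A ∧ j ∉ A) ∨ (j ∈ A ∧ i ∉ A))) := by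
    intro i j he
    constructor
    · rintro ⟨-, i', j', hEq, hi', hj'⟩
      rw [Sym2.eq_iff] at hEq
      rcases hEq with ⟨rfl, rfl⟩ | ⟨rfl, rfl⟩
      · exact Or.inl ⟨hi', hj'⟩
      · exact Or.inr ⟨hi', hj'⟩
    · rintro (⟨h1, h2⟩ | ⟨h1, h2⟩)
      · exact ⟨he, i, j, rfl, h1, h2⟩
      · exact ⟨he, j, i, Sym2.eq_swap.symm, h1, h2⟩
  have hEBfin : (edgeBoundary E' A).Finite := hE'fin.subset (fun e he => he.1)
  have henergy : ∀ a b : ℝ, energy E' (a • f + b • g) = (a - b) ^ 2 * c := by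
    intro a b
    rw [energy, ← hE'fin.coe_toFinset, finsum_mem_coe_finset]
    have h2 : ∀ e ∈ hE'fin.toFinset,
        edgeEnergy (a • f + b • g) e = if e ∈ edgeBoundary E' A then (a - b) ^ 2 else 0 := by
      intro e he
      rw [Set.Finite.mem_toFinset] at he
      induction e using Sym2.ind with
      | _ i j =>
        obtain ⟨hiΩb, hjΩb⟩ := hend i j he
        have hE : edgeEnergy (a • f + b • g) s(i,j) =
            ((a • f + b • g) i - (a • f + b • g) j) ^ 2 := rfl
        rw [hE, hval a b i hiΩb, hval a b j hjΩb, hmemiff i j he]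
        by_cases hiA : i ∈ A <;> by_cases hjA : j ∈ A <;> simp [hiA, hjA] <;> ring
    rw [Finset.sum_congr rfl h2, ← Finset.sum_filter]
    rw [Finset.sum_const]
    have hfilt : hE'fin.toFinset.filter (· ∈ edgeBoundary E' A) = hEBfin.toFinset := by
      ext e
      simp only [Finset.mem_filter, Set.Finite.mem_toFinset]
      exact ⟨fun h => h.2, fun h => ⟨h.1, h⟩⟩
    rw [hfilt, nsmul_eq_mul, ← Set.ncard_eq_toFinset_card _ hEBfin]
    ring
  have hABtoF : hBfin.toFinset.filter (· ∈ A) = hABfin.toFinset := by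
    ext i
    simp only [Finset.mem_filter, Set.Finite.mem_toFinset, Set.mem_inter_iff]
    all_goals tauto
  have hBAtoF : hBfin.toFinset.filter (¬ · ∈ A) = hBAfin.toFinset := by
    ext i
    simp only [Finset.mem_filter, Set.Finite.mem_toFinset, Set.mem_diff]
    all_goals tauto
  have hbnorm : ∀ a b : ℝ, boundaryNorm B (a • f + b • g) = a ^ 2 * m + b ^ 2 * n := by
    intro a b
    rw [boundaryNorm, ← hBfin.coe_toFinset, finsum_mem_coe_finset]
    rw [← Finset.sum_filter_add_sum_filter_not _ (· ∈ A)]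
    have e1 : ∀ i ∈ hBfin.toFinset.filter (· ∈ A), (a • f + b • g) i ^ 2 = a ^ 2 := by
      intro i hi
      rw [Finset.mem_filter, Set.Finite.mem_toFinset] at hi
      rw [hval a b i (hBsub hi.1), if_pos hi.2]
    have e2 : ∀ i ∈ hBfin.toFinset.filter (¬ · ∈ A), (a • f + b • g) i ^ 2 = b ^ 2 := by
      intro i hi
      rw [Finset.mem_filter, Set.Finite.mem_toFinset] at hi
      rw [hval a b i (hBsub hi.1), if_neg hi.2]
    rw [Finset.sum_congr rfl e1, Finset.sum_congr rfl e2, Finset.sum_const, Finset.sum_const,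
      hABtoF, hBAtoF, nsmul_eq_mul, nsmul_eq_mul,
      ← Set.ncard_eq_toFinset_card _ hABfin, ← Set.ncard_eq_toFinset_card _ hBAfin]
    ring
  -- the bound on the Rayleigh quotients over F
  have hray : ∀ r ∈ { r : ℝ | ∃ u ∈ F, restrictTo B u ≠ 0 ∧
      r = energy E' u / boundaryNorm B u }, r ≤ 2 * (c / m) := by
    rintro r ⟨u, huF, hures, rfl⟩
    obtain ⟨a, b, rfl⟩ := Submodule.mem_span_pair.mp huF
    have hab : a ≠ 0 ∨ b ≠ 0 := by
      by_contra h
      push_neg at h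
      obtain ⟨rfl, rfl⟩ := h
      apply hures
      simp
    have hden : 0 < a ^ 2 * m + b ^ 2 * n := by
      rcases hab with ha | hb
      · have : 0 < a ^ 2 * m := mul_pos (by positivity) hm
        nlinarith [mul_nonneg (sq_nonneg b) hn.le]
      · have : 0 < b ^ 2 * n := mul_pos (by positivity) hn
        nlinarith [mul_nonneg (sq_nonneg a) hm.le]
    rw [henergy a b, hbnorm a b]
    exact rayleigh_bound a b c m n hc hm hmn hden
  -- conclude
  have hbdd : BddBelow { t : ℝ | ∃ F : Submodule ℝ (V → ℝ), F ≤ funcsOn Ωb ∧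
      Module.finrank ℝ ↥F = 1 + 1 ∧
      Module.finrank ℝ ↥(F.map (restrictTo B)) = 1 + 1 ∧
      t = sSup { r : ℝ | ∃ u ∈ F, restrictTo B u ≠ 0 ∧
        r = energy E' u / boundaryNorm B u } } := by
    refine ⟨0, ?_⟩
    rintro t ⟨F₀, -, -, -, rfl⟩
    apply Real.sSup_nonneg
    rintro r ⟨u, -, -, rfl⟩
    apply div_nonneg
    · rw [energy, finsum_mem_def]
      apply finsum_nonneg
      intro e
      apply Set.indicator_nonneg
      intro e' _
      induction e' using Sym2.ind with
      | _ i j => exact sq_nonneg _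
    · rw [boundaryNorm, finsum_mem_def]
      apply finsum_nonneg
      intro i
      exact Set.indicator_nonneg (fun _ _ => sq_nonneg _) i
  have hstep : steklov E' Ωb B 1 ≤ sSup { r : ℝ | ∃ u ∈ F, restrictTo B u ≠ 0 ∧
      r = energy E' u / boundaryNorm B u } := by
    exact csInf_le hbdd ⟨F, hFsub, hFrank, hFrank', rfl⟩
  have hsup : sSup { r : ℝ | ∃ u ∈ F, restrictTo B u ≠ 0 ∧
      r = energy E' u / boundaryNorm B u } ≤ 2 * (c / m) :=
    Real.sSup_le hray (by positivity)
  calc steklov E' Ωb B 1 ≤ 2 * (c / m) := le_trans hstep hsup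
    _ = 2 * escobarConst E' Ωb B := by rw [hEsc]
end

section
/- (Perrin's first diameter lower bound.) Let (Γ,B) be a finite simple connected graph with boundary, with |B| ≥ 2, and let d_B = max{ d_Γ(v,w) : v,w∈B } be the extrinsic diameter of the boundary, where d_Γ is the graph distance in Γ. Then σ₁(Γ,B) ≥ |B| / ((|B|−1)²·d_B). -/
open DiscreteSteklov

section Aux

open DiscreteSteklov Module

variable {V : Type*}

lemma edgeEnergy_nonneg (u : V → ℝ) (e : Sym2 V) : 0 ≤ edgeEnergy u e := by
  induction e using Sym2.ind with
  | _ i j =>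
    simp only [edgeEnergy, Sym2.lift_mk]
    positivity

lemma edgeEnergy_mk (u : V → ℝ) (i j : V) : edgeEnergy u s(i, j) = (u i - u j) ^ 2 := by
  simp only [edgeEnergy, Sym2.lift_mk]

lemma edgeEnergy_neg (u : V → ℝ) : edgeEnergy (-u) = edgeEnergy u := by
  funext e
  induction e using Sym2.ind with
  | _ i j =>
    simp only [edgeEnergy, Sym2.lift_mk, Pi.neg_apply]
    ring

lemma energy_neg (E' : Set (Sym2 V)) (u : V → ℝ) : energy E' (-u) = energy E' u := by
  simp only [energy, edgeEnergy_neg]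

lemma key_ineq (x y L S : ℝ) (hL : 0 ≤ L) (hS : 0 ≤ S) (hy : y ^ 2 ≤ L * S) :
    (x + y) ^ 2 ≤ (L + 1) * (x ^ 2 + S) := by
  rcases eq_or_lt_of_le hL with h0 | h0
  · have hy0 : y = 0 := by nlinarith [sq_nonneg y]
    subst hy0
    nlinarith [sq_nonneg x]
  · have h1 : 0 ≤ (L * x - y) ^ 2 := sq_nonneg _
    have h2 : 0 ≤ (1 + L) * (L * S - y ^ 2) :=
      mul_nonneg (by linarith) (by linarith)
    nlinarith [mul_pos h0 h0]

lemma walk_sq_le {G : SimpleGraph V} (u : V → ℝ) {a c : V} (p : G.Walk a c) :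
    (u a - u c) ^ 2 ≤ (p.length : ℝ) * (p.edges.map (edgeEnergy u)).sum := by
  induction p with
  | nil => simp
  | @cons a b c h q ih =>
    have hS : 0 ≤ (q.edges.map (edgeEnergy u)).sum := by
      apply List.sum_nonneg
      intro r hr
      obtain ⟨e, -, rfl⟩ := List.mem_map.mp hr
      exact edgeEnergy_nonneg u e
    have hL : (0 : ℝ) ≤ (q.length : ℝ) := Nat.cast_nonneg _
    have key := key_ineq (u a - u b) (u b - u c) (q.length : ℝ)
      (q.edges.map (edgeEnergy u)).sum hL hS ih
    simp only [SimpleGraph.Walk.edges_cons, SimpleGraph.Walk.length_cons,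
      List.map_cons, List.sum_cons, edgeEnergy_mk]
    push_cast
    calc (u a - u c) ^ 2 = ((u a - u b) + (u b - u c)) ^ 2 := by ring
      _ ≤ ((q.length : ℝ) + 1) * ((u a - u b) ^ 2 + (q.edges.map (edgeEnergy u)).sum) := key
      _ = ((q.length : ℝ) + 1) * ((u a - u b) ^ 2 + (q.edges.map (edgeEnergy u)).sum) := rfl

lemma energy_eq_sum [Fintype V] {G : SimpleGraph V} (u : V → ℝ) :
    energy G.edgeSet u = ∑ e ∈ G.edgeSet.toFinite.toFinset, edgeEnergy u e :=
  finsum_mem_eq_finite_toFinset_sum _ _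

lemma energy_nonneg [Fintype V] {G : SimpleGraph V} (u : V → ℝ) :
    0 ≤ energy G.edgeSet u := by
  rw [energy_eq_sum]
  exact Finset.sum_nonneg fun e _ => edgeEnergy_nonneg u e

lemma pathSum_le_energy [Fintype V] {G : SimpleGraph V} (u : V → ℝ) {a c : V}
    {p : G.Walk a c} (hp : p.IsPath) :
    (p.edges.map (edgeEnergy u)).sum ≤ energy G.edgeSet u := by
  classical
  rw [energy_eq_sum, ← List.sum_toFinset _ hp.edges_nodup]
  apply Finset.sum_le_sum_of_subset_of_nonneg
  · intro e he
    rw [List.mem_toFinset] at he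
    rw [Set.Finite.mem_toFinset]
    exact p.edges_subset_edgeSet he
  · intro e _ _
    exact edgeEnergy_nonneg u e

lemma boundaryNorm_eq_sum [Fintype V] (B : Set V) (u : V → ℝ) :
    boundaryNorm B u = ∑ i ∈ B.toFinite.toFinset, u i ^ 2 :=
  finsum_mem_eq_finite_toFinset_sum _ _

lemma boundaryNorm_pos [Fintype V] (B : Set V) (u : V → ℝ)
    (hne : restrictTo B u ≠ 0) : 0 < boundaryNorm B u := by
  classical
  obtain ⟨x, hx⟩ : ∃ x : ↥B, u ↑x ≠ 0 := by
    by_contra h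
    push_neg at h
    exact hne (funext fun x => h x)
  rw [boundaryNorm_eq_sum]
  have hmem : (x : V) ∈ B.toFinite.toFinset := by
    rw [Set.Finite.mem_toFinset]; exact x.2
  calc (0 : ℝ) < u ↑x ^ 2 := by positivity
    _ ≤ ∑ i ∈ B.toFinite.toFinset, u i ^ 2 :=
      Finset.single_le_sum (fun i _ => sq_nonneg (u i)) hmem

end Aux

section Key

open DiscreteSteklov Module

lemma key_estimate {V : Type*} [Fintype V] (G : SimpleGraph V) (hG : G.Connected)
    (B : Set V) (hB : 2 ≤ B.ncard) (d : ℕ)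
    (hd : ∀ v ∈ B, ∀ w ∈ B, G.dist v w ≤ d)
    (u : V → ℝ) (hsum : ∑ i ∈ B.toFinite.toFinset, u i = 0)
    (hne : restrictTo B u ≠ 0) :
    (B.ncard : ℝ) / (((B.ncard : ℝ) - 1) ^ 2 * (d : ℝ)) * boundaryNorm B u ≤
      energy G.edgeSet u := by
  classical
  set Bf := B.toFinite.toFinset with hBfdef
  have hBfcard : Bf.card = B.ncard := by
    rw [hBfdef, ← Set.ncard_eq_toFinset_card B B.toFinite]
  set n := B.ncard with hn
  have hN2 : (2 : ℝ) ≤ (n : ℝ) := by exact_mod_cast hB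
  have hm : (0 : ℝ) < (n : ℝ) - 1 := by linarith
  have main : ∀ v : V → ℝ, (∑ i ∈ Bf, v i = 0) →
      ∀ i₀ ∈ Bf, 0 < v i₀ → (∀ i ∈ Bf, v i ^ 2 ≤ v i₀ ^ 2) →
      (n : ℝ) / (((n : ℝ) - 1) ^ 2 * (d : ℝ)) * (∑ i ∈ Bf, v i ^ 2) ≤
        energy G.edgeSet v := by
    intro v hv i₀ hi₀ hpos hmax
    have hi₀B : i₀ ∈ B := (Set.Finite.mem_toFinset _).mp hi₀
    have hcard_erase : (Bf.erase i₀).card = n - 1 := by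
      rw [Finset.card_erase_of_mem hi₀, hBfcard]
    have herase_ne : (Bf.erase i₀).Nonempty := by
      rw [← Finset.card_pos, hcard_erase]; omega
    have hsum_erase : ∑ i ∈ Bf.erase i₀, v i = -v i₀ := by
      have h := Finset.add_sum_erase Bf v hi₀
      rw [hv] at h
      linarith
    obtain ⟨j, hjmem, hjmin⟩ := Finset.exists_min_image (Bf.erase i₀) v herase_ne
    have hmj : ((n : ℝ) - 1) * v j ≤ -v i₀ := by
      have h := Finset.card_nsmul_le_sum (Bf.erase i₀) v (v j) (fun i hi => hjmin i hi)
      rw [hsum_erase, hcard_erase, nsmul_eq_mul] at h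
      have hc : ((n - 1 : ℕ) : ℝ) = (n : ℝ) - 1 := by
        have : 1 ≤ n := by omega
        push_cast [Nat.cast_sub this]
        ring
      rw [hc] at h
      exact h
    have hji₀ : j ≠ i₀ := (Finset.mem_erase.mp hjmem).1
    have hjB : j ∈ B := (Set.Finite.mem_toFinset _).mp (Finset.mem_erase.mp hjmem).2
    -- distance facts
    obtain ⟨p, hp, hpl⟩ := hG.exists_path_of_dist i₀ j
    have hD1 : 0 < G.dist i₀ j := hG.pos_dist_of_ne (Ne.symm hji₀)
    have hDd : G.dist i₀ j ≤ d := hd i₀ hi₀B j hjB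
    have hE0 : 0 ≤ energy G.edgeSet v := energy_nonneg v
    have h3 : (v i₀ - v j) ^ 2 ≤ (d : ℝ) * energy G.edgeSet v := by
      calc (v i₀ - v j) ^ 2
          ≤ (p.length : ℝ) * (p.edges.map (edgeEnergy v)).sum := walk_sq_le v p
        _ = (G.dist i₀ j : ℝ) * (p.edges.map (edgeEnergy v)).sum := by rw [hpl]
        _ ≤ (G.dist i₀ j : ℝ) * energy G.edgeSet v :=
            mul_le_mul_of_nonneg_left (pathSum_le_energy v hp) (Nat.cast_nonneg _)
        _ ≤ (d : ℝ) * energy G.edgeSet v :=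
            mul_le_mul_of_nonneg_right (by exact_mod_cast hDd) hE0
    have h4 : (n : ℝ) * v i₀ ≤ ((n : ℝ) - 1) * (v i₀ - v j) := by nlinarith [hmj]
    have h5 : (n : ℝ) ^ 2 * v i₀ ^ 2 ≤ ((n : ℝ) - 1) ^ 2 * (v i₀ - v j) ^ 2 := by
      have hpos2 : 0 < (n : ℝ) * v i₀ := mul_pos (by linarith) hpos
      nlinarith [mul_self_le_mul_self hpos2.le h4]
    have h6 : ∑ i ∈ Bf, v i ^ 2 ≤ (n : ℝ) * v i₀ ^ 2 := by
      have h := Finset.sum_le_card_nsmul Bf (fun i => v i ^ 2) (v i₀ ^ 2)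
        (fun i hi => hmax i hi)
      rwa [hBfcard, nsmul_eq_mul] at h
    have hd1 : (1 : ℝ) ≤ (d : ℝ) := by exact_mod_cast le_trans hD1 hDd
    rw [div_mul_eq_mul_div, div_le_iff₀ (by positivity)]
    have s1 : (n : ℝ) * (∑ i ∈ Bf, v i ^ 2) ≤ (n : ℝ) ^ 2 * v i₀ ^ 2 := by
      have := mul_le_mul_of_nonneg_left h6 (by linarith : (0 : ℝ) ≤ (n : ℝ))
      nlinarith [this]
    have s2 : ((n : ℝ) - 1) ^ 2 * (v i₀ - v j) ^ 2 ≤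
        ((n : ℝ) - 1) ^ 2 * ((d : ℝ) * energy G.edgeSet v) :=
      mul_le_mul_of_nonneg_left h3 (sq_nonneg _)
    calc (n : ℝ) * (∑ i ∈ Bf, v i ^ 2)
        ≤ (n : ℝ) ^ 2 * v i₀ ^ 2 := s1
      _ ≤ ((n : ℝ) - 1) ^ 2 * (v i₀ - v j) ^ 2 := h5
      _ ≤ ((n : ℝ) - 1) ^ 2 * ((d : ℝ) * energy G.edgeSet v) := s2
      _ = energy G.edgeSet v * (((n : ℝ) - 1) ^ 2 * (d : ℝ)) := by ring
  -- apply `main` to `u` or `-u`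
  obtain ⟨x, hx⟩ : ∃ x : ↥B, u ↑x ≠ 0 := by
    by_contra h
    push_neg at h
    exact hne (funext fun x => h x)
  have hxBf : (x : V) ∈ Bf := by rw [hBfdef, Set.Finite.mem_toFinset]; exact x.2
  obtain ⟨i₀, hi₀, hmax⟩ := Finset.exists_max_image Bf (fun i => u i ^ 2) ⟨x, hxBf⟩
  have hq : 0 < u i₀ ^ 2 := lt_of_lt_of_le (by positivity) (hmax x hxBf)
  have hu0 : u i₀ ≠ 0 := by
    intro h
    rw [h] at hq
    simp at hq
  rw [boundaryNorm_eq_sum]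
  rcases lt_or_gt_of_ne hu0 with hneg | hpos
  · have hres := main (-u) (by simp [hsum]) i₀ hi₀
      (by simpa using hneg) (by intro i hi; simpa using hmax i hi)
    rw [energy_neg] at hres
    simp only [Pi.neg_apply, neg_sq] at hres
    exact hres
  · exact main u hsum i₀ hi₀ hpos hmax

end Key

section Lin

open DiscreteSteklov Module

variable {V : Type*} [Fintype V]

lemma ker_restrict_eq_bot (B : Set V) (F : Submodule ℝ (V → ℝ))
    (h2 : finrank ℝ ↥F = 2) (h2' : finrank ℝ ↥(F.map (restrictTo B)) = 2) :
    LinearMap.ker ((restrictTo B).comp F.subtype) = ⊥ := by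
  classical
  set g := (restrictTo B).comp F.subtype with hg
  have hrange : LinearMap.range g = F.map (restrictTo B) := by
    rw [hg, LinearMap.range_comp, Submodule.range_subtype]
  have h := LinearMap.finrank_range_add_finrank_ker g
  rw [hrange, h2', h2] at h
  have h0 : finrank ℝ ↥(LinearMap.ker g) = 0 := by omega
  exact Submodule.finrank_eq_zero.mp h0

lemma exists_mean_zero (B : Set V) (F : Submodule ℝ (V → ℝ))
    (h2 : finrank ℝ ↥F = 2) (h2' : finrank ℝ ↥(F.map (restrictTo B)) = 2) :
    ∃ u ∈ F, (∑ i ∈ B.toFinite.toFinset, u i = 0) ∧ restrictTo B u ≠ 0 := by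
  classical
  have hker := ker_restrict_eq_bot B F h2 h2'
  set g := (restrictTo B).comp F.subtype with hg
  let φ : ↥F →ₗ[ℝ] ℝ :=
    { toFun := fun x => ∑ i ∈ B.toFinite.toFinset, (x : V → ℝ) i
      map_add' := by intro x y; simp [Finset.sum_add_distrib]
      map_smul' := by intro c x; simp [Finset.mul_sum]
    }
  have hkerφ : LinearMap.ker φ ≠ ⊥ := by
    intro hbot
    have h := LinearMap.finrank_range_add_finrank_ker φ
    rw [hbot, h2, finrank_bot] at h
    have hle : finrank ℝ ↥(LinearMap.range φ) ≤ finrank ℝ ℝ := Submodule.finrank_le _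
    rw [finrank_self] at hle
    omega
  obtain ⟨x, hx, hx0⟩ := Submodule.exists_mem_ne_zero_of_ne_bot hkerφ
  refine ⟨(x : V → ℝ), x.2, ?_, ?_⟩
  · exact LinearMap.mem_ker.mp hx
  · intro h0
    have hgx : g x = 0 := h0
    rw [LinearMap.ker_eq_bot] at hker
    exact hx0 (hker (by rw [hgx, map_zero]))

lemma rayleigh_bddAbove (G : SimpleGraph V) (B : Set V) (F : Submodule ℝ (V → ℝ))
    (h2 : finrank ℝ ↥F = 2) (h2' : finrank ℝ ↥(F.map (restrictTo B)) = 2) :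
    BddAbove { r : ℝ | ∃ u ∈ F, restrictTo B u ≠ 0 ∧
      r = energy G.edgeSet u / boundaryNorm B u } := by
  classical
  haveI : Fintype ↥B := B.toFinite.fintype
  have hker := ker_restrict_eq_bot B F h2 h2'
  obtain ⟨S', hS'⟩ := ((restrictTo B).comp F.subtype).exists_leftInverse_of_injective hker
  let Sc : (↥B → ℝ) →L[ℝ] (V → ℝ) := LinearMap.toContinuousLinearMap (F.subtype.comp S')
  have hrec : ∀ u, (hu : u ∈ F) → Sc (restrictTo B u) = u := by
    intro u hu
    have h1 : ((restrictTo B).comp F.subtype) ⟨u, hu⟩ = restrictTo B u := rfl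
    have h2 := LinearMap.congr_fun hS' ⟨u, hu⟩
    calc Sc (restrictTo B u) = (F.subtype.comp S') (restrictTo B u) := by
          rw [LinearMap.coe_toContinuousLinearMap']
      _ = F.subtype (S' (((restrictTo B).comp F.subtype) ⟨u, hu⟩)) := by rw [h1]; rfl
      _ = F.subtype ⟨u, hu⟩ := by
          rw [show S' (((restrictTo B).comp F.subtype) ⟨u, hu⟩) = (⟨u, hu⟩ : ↥F) from h2]
      _ = u := rfl
  set Ef := G.edgeSet.toFinite.toFinset with hEf
  refine ⟨(Ef.card : ℝ) * 4 * ‖Sc‖ ^ 2, ?_⟩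
  rintro r ⟨u, hu, hT, rfl⟩
  have hbn : 0 < boundaryNorm B u := boundaryNorm_pos B u hT
  -- ‖restrictTo B u‖² ≤ boundaryNorm B u
  have hTu : ‖restrictTo B u‖ ^ 2 ≤ boundaryNorm B u := by
    have hsq : ‖restrictTo B u‖ ≤ Real.sqrt (boundaryNorm B u) := by
      rw [pi_norm_le_iff_of_nonneg (Real.sqrt_nonneg _)]
      intro i
      rw [Real.norm_eq_abs]
      apply Real.abs_le_sqrt
      rw [boundaryNorm_eq_sum]
      exact Finset.single_le_sum (fun i _ => sq_nonneg (u i))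
        ((Set.Finite.mem_toFinset _).mpr i.2)
    calc ‖restrictTo B u‖ ^ 2 ≤ Real.sqrt (boundaryNorm B u) ^ 2 :=
          pow_le_pow_left₀ (norm_nonneg _) hsq 2
      _ = boundaryNorm B u := Real.sq_sqrt hbn.le
  have hu_norm : ‖u‖ ≤ ‖Sc‖ * ‖restrictTo B u‖ := by
    conv_lhs => rw [← hrec u hu]
    exact Sc.le_opNorm _
  have hE : energy G.edgeSet u ≤ (Ef.card : ℝ) * (4 * ‖u‖ ^ 2) := by
    rw [energy_eq_sum]
    have hb : ∀ e ∈ Ef, edgeEnergy u e ≤ 4 * ‖u‖ ^ 2 := by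
      intro e _
      induction e using Sym2.ind with
      | _ i j =>
        rw [edgeEnergy_mk]
        have h1 : |u i| ≤ ‖u‖ := by
          rw [← Real.norm_eq_abs]; exact norm_le_pi_norm u i
        have h2 : |u j| ≤ ‖u‖ := by
          rw [← Real.norm_eq_abs]; exact norm_le_pi_norm u j
        have h1' := abs_le.mp h1
        have h2' := abs_le.mp h2
        nlinarith [h1'.1, h1'.2, h2'.1, h2'.2]
    have h := Finset.sum_le_card_nsmul Ef (edgeEnergy u) (4 * ‖u‖ ^ 2) hb
    rwa [nsmul_eq_mul] at h
  rw [div_le_iff₀ hbn]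
  have q1 : ‖u‖ ^ 2 ≤ ‖Sc‖ ^ 2 * ‖restrictTo B u‖ ^ 2 := by
    calc ‖u‖ ^ 2 ≤ (‖Sc‖ * ‖restrictTo B u‖) ^ 2 :=
          pow_le_pow_left₀ (norm_nonneg _) hu_norm 2
      _ = ‖Sc‖ ^ 2 * ‖restrictTo B u‖ ^ 2 := by ring
  have q2 : ‖Sc‖ ^ 2 * ‖restrictTo B u‖ ^ 2 ≤ ‖Sc‖ ^ 2 * boundaryNorm B u :=
    mul_le_mul_of_nonneg_left hTu (sq_nonneg _)
  calc energy G.edgeSet u ≤ (Ef.card : ℝ) * (4 * ‖u‖ ^ 2) := hE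
    _ ≤ (Ef.card : ℝ) * (4 * (‖Sc‖ ^ 2 * boundaryNorm B u)) := by
        apply mul_le_mul_of_nonneg_left _ (Nat.cast_nonneg _)
        nlinarith [q1.trans q2]
    _ = (Ef.card : ℝ) * 4 * ‖Sc‖ ^ 2 * boundaryNorm B u := by ring

lemma exists_F (B : Set V) (hB : 2 ≤ B.ncard) :
    ∃ F : Submodule ℝ (V → ℝ), F ≤ funcsOn Set.univ ∧ finrank ℝ ↥F = 2 ∧
      finrank ℝ ↥(F.map (restrictTo B)) = 2 := by
  classical
  obtain ⟨v, hv, w, hw, hvw⟩ := (Set.one_lt_ncard B.toFinite).mp (by omega)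
  set f : V → ℝ := Pi.single v 1 with hf
  set g : V → ℝ := Pi.single w 1 with hgdef
  have hfv : f v = 1 := Pi.single_eq_same v 1
  have hfw : f w = 0 := Pi.single_eq_of_ne (Ne.symm hvw) 1
  have hgv : g v = 0 := Pi.single_eq_of_ne hvw 1
  have hgw : g w = 1 := Pi.single_eq_same w 1
  have hrange : Set.range ![f, g] = {f, g} := by
    ext y
    simp [Fin.exists_fin_two]
    tauto
  have hrange' : Set.range ![restrictTo B f, restrictTo B g] =
      {restrictTo B f, restrictTo B g} := by
    ext y
    simp [Fin.exists_fin_two]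
    tauto
  have hli : LinearIndependent ℝ ![f, g] := by
    rw [LinearIndependent.pair_iff]
    intro s t hst
    have h1 := congrFun hst v
    have h2 := congrFun hst w
    simp only [Pi.add_apply, Pi.smul_apply, smul_eq_mul, Pi.zero_apply, hfv, hfw, hgv,
      hgw, mul_one, mul_zero, add_zero, zero_add] at h1 h2
    exact ⟨h1, h2⟩
  have hli' : LinearIndependent ℝ ![restrictTo B f, restrictTo B g] := by
    rw [LinearIndependent.pair_iff]
    intro s t hst
    have h1 := congrFun hst ⟨v, hv⟩
    have h2 := congrFun hst ⟨w, hw⟩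
    simp only [Pi.add_apply, Pi.smul_apply, smul_eq_mul, Pi.zero_apply] at h1 h2
    have e1 : restrictTo B f ⟨v, hv⟩ = 1 := hfv
    have e2 : restrictTo B g ⟨v, hv⟩ = 0 := hgv
    have e3 : restrictTo B f ⟨w, hw⟩ = 0 := hfw
    have e4 : restrictTo B g ⟨w, hw⟩ = 1 := hgw
    rw [e1, e2, mul_one, mul_zero, add_zero] at h1
    rw [e3, e4, mul_zero, mul_one, zero_add] at h2
    exact ⟨h1, h2⟩
  refine ⟨Submodule.span ℝ {f, g}, fun u _ x hx => absurd (Set.mem_univ x) hx, ?_, ?_⟩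
  · rw [← hrange, finrank_span_eq_card hli, Fintype.card_fin]
  · rw [Submodule.map_span, Set.image_pair, ← hrange', finrank_span_eq_card hli',
      Fintype.card_fin]

end Lin

/-- Perrin's first lower bound via the extrinsic diameter of the boundary:
`σ₁(Γ,B) ≥ |B| / ((|B|−1)² · d_B)`. -/
theorem perrin_first_diameter_bound
    {V : Type*} [Fintype V] (G : SimpleGraph V) (hG : G.Connected)
    (B : Set V) (hB : 2 ≤ B.ncard) :
    (B.ncard : ℝ) /
        (((B.ncard : ℝ) - 1) ^ 2 *
          ((sSup {n : ℕ | ∃ v ∈ B, ∃ w ∈ B, G.dist v w = n} : ℕ) : ℝ)) ≤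
      steklov G.edgeSet Set.univ B 1 := by
  classical
  have hDbdd : BddAbove {n : ℕ | ∃ v ∈ B, ∃ w ∈ B, G.dist v w = n} := by
    refine ⟨Fintype.card V, ?_⟩
    rintro n ⟨v, hv, w, hw, rfl⟩
    obtain ⟨p, hp, hpl⟩ := hG.exists_path_of_dist v w
    rw [← hpl]
    exact hp.length_lt.le
  set d := sSup {n : ℕ | ∃ v ∈ B, ∃ w ∈ B, G.dist v w = n} with hd
  have hd_ub : ∀ v ∈ B, ∀ w ∈ B, G.dist v w ≤ d := fun v hv w hw =>
    le_csSup hDbdd ⟨v, hv, w, hw, rfl⟩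
  unfold steklov
  apply le_csInf
  · obtain ⟨F, hF1, hF2, hF3⟩ := exists_F B hB
    exact ⟨_, F, hF1, hF2, hF3, rfl⟩
  · rintro t ⟨F, hF1, hF2, hF3, rfl⟩
    obtain ⟨u, huF, husum, hune⟩ := exists_mean_zero B F hF2 hF3
    have hbn : 0 < boundaryNorm B u := boundaryNorm_pos B u hune
    have hkey := key_estimate G hG B hB d hd_ub u husum hune
    refine le_trans ?_ (le_csSup (rayleigh_bddAbove G B F hF2 hF3) ⟨u, huF, hune, rfl⟩)
    rw [le_div_iff₀ hbn]
    exact hkey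
end

section
/- (Perrin's upper bound for subgraphs of Cayley graphs of polynomial growth.) Let G be the Cayley graph of a group with finite symmetric generating set S (1∉S), and suppose G has polynomial growth of order D for some integer D ≥ 1, with growth constant C₀. Then there exists a constant C > 0, depending only on G, such that for every finite connected set of vertices Ω with vertex boundary B=δΩ and associated graph with boundary (Ω̄,E'): if D ≤ 2 then σ₁(Ω̄) ≤ C/|B|, and if D > 2 then σ₁(Ω̄) ≤ C·|Ω|^{(D−2)/D}/|B|. -/
/-! Discrete Steklov eigenvalues of graphs with boundary. -/

namespace DiscreteSteklov

variable {V : Type*}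

/-- The Cayley graph of a group with respect to a finite symmetric generating
set `S` not containing the identity. -/
def cayleyGraph {Γ : Type*} [Group Γ] (S : Finset Γ)
    (hS : ∀ s ∈ S, s⁻¹ ∈ S) (h1 : (1 : Γ) ∉ S) : SimpleGraph Γ where
  Adj x y := x⁻¹ * y ∈ S
  symm := by
    constructor
    intro x y h
    have h2 := hS _ h
    simpa [mul_inv_rev] using h2
  loopless := by
    constructor
    intro x h
    simp only [inv_mul_cancel] at h
    exact h1 h

end DiscreteSteklov

open DiscreteSteklov

namespace PerrinProof
open DiscreteSteklov

variable {V : Type*}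

lemma mem_funcsOn (S : Set V) (u : V → ℝ) : u ∈ funcsOn S ↔ ∀ v ∉ S, u v = 0 := Iff.rfl

lemma edgeEnergy_mk (u : V → ℝ) (i j : V) : edgeEnergy u s(i, j) = (u i - u j) ^ 2 := rfl

lemma edgeEnergy_nonneg (u : V → ℝ) (e : Sym2 V) : 0 ≤ edgeEnergy u e := by
  induction e using Sym2.ind with
  | _ i j => rw [edgeEnergy_mk]; positivity

lemma energy_eq_sum {E' : Set (Sym2 V)} (hE : E'.Finite) (u : V → ℝ) :
    energy E' u = ∑ e ∈ hE.toFinset, edgeEnergy u e := by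
  rw [energy, ← finsum_mem_coe_finset, hE.coe_toFinset]

lemma boundaryNorm_eq_sum {B : Set V} (hB : B.Finite) (u : V → ℝ) :
    boundaryNorm B u = ∑ i ∈ hB.toFinset, u i ^ 2 := by
  rw [boundaryNorm, ← finsum_mem_coe_finset, hB.coe_toFinset]

lemma energy_nonneg {E' : Set (Sym2 V)} (hE : E'.Finite) (u : V → ℝ) :
    0 ≤ energy E' u := by
  rw [energy_eq_sum hE]
  exact Finset.sum_nonneg fun e _ => edgeEnergy_nonneg u e

lemma boundaryNorm_nonneg {B : Set V} (hB : B.Finite) (u : V → ℝ) :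
    0 ≤ boundaryNorm B u := by
  rw [boundaryNorm_eq_sum hB]
  exact Finset.sum_nonneg fun i _ => sq_nonneg _

lemma restrictTo_apply (B : Set V) (u : V → ℝ) (i : ↥B) : restrictTo B u i = u ↑i := rfl

theorem steklov_le_of_pair (E' : Set (Sym2 V)) (Ωbar B : Set V)
    (hE : E'.Finite) (hB : B.Finite)
    (u₁ u₂ : V → ℝ) (R : ℝ) (hR : 0 ≤ R)
    (hmem₁ : u₁ ∈ funcsOn Ωbar) (hmem₂ : u₂ ∈ funcsOn Ωbar)
    (hedge : ∀ e ∈ E', (∀ v ∈ e, u₁ v = 0) ∨ (∀ v ∈ e, u₂ v = 0))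
    (hbd : ∀ i ∈ B, u₁ i = 0 ∨ u₂ i = 0)
    (hN₁ : 0 < boundaryNorm B u₁) (hN₂ : 0 < boundaryNorm B u₂)
    (hE₁ : energy E' u₁ ≤ R * boundaryNorm B u₁)
    (hE₂ : energy E' u₂ ≤ R * boundaryNorm B u₂) :
    steklov E' Ωbar B 1 ≤ R := by
  classical
  have hex : ∀ u : V → ℝ, 0 < boundaryNorm B u → ∃ i ∈ B, u i ≠ 0 := by
    intro u hu
    by_contra h
    push_neg at h
    rw [boundaryNorm_eq_sum hB] at hu
    have : ∑ i ∈ hB.toFinset, u i ^ 2 = 0 := by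
      apply Finset.sum_eq_zero
      intro i hi
      rw [h i (hB.mem_toFinset.mp hi)]; ring
    linarith
  obtain ⟨i₁, hi₁B, hi₁⟩ := hex u₁ hN₁
  obtain ⟨i₂, hi₂B, hi₂⟩ := hex u₂ hN₂
  set r₁ := restrictTo B u₁ with hr₁
  set r₂ := restrictTo B u₂ with hr₂
  have hli_r : LinearIndependent ℝ ![r₁, r₂] := by
    rw [LinearIndependent.pair_iff]
    intro s t hst
    constructor
    · have := congrFun hst ⟨i₁, hi₁B⟩
      simp only [Pi.add_apply, Pi.smul_apply, smul_eq_mul, Pi.zero_apply] at this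
      have hu₂i : u₂ i₁ = 0 := by
        rcases hbd i₁ hi₁B with h | h
        · exact absurd h hi₁
        · exact h
      rw [hr₁, hr₂, restrictTo_apply, restrictTo_apply] at this
      simp only [hu₂i, mul_zero, add_zero] at this
      exact (mul_eq_zero.mp this).resolve_right hi₁
    · have := congrFun hst ⟨i₂, hi₂B⟩
      simp only [Pi.add_apply, Pi.smul_apply, smul_eq_mul, Pi.zero_apply] at this
      have hu₁i : u₁ i₂ = 0 := by
        rcases hbd i₂ hi₂B with h | h
        · exact h
        · exact absurd h hi₂
      rw [hr₁, hr₂, restrictTo_apply, restrictTo_apply] at this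
      simp only [hu₁i, mul_zero, zero_add] at this
      exact (mul_eq_zero.mp this).resolve_right hi₂
  have hcomp : (restrictTo B) ∘ ![u₁, u₂] = ![r₁, r₂] := by
    funext i
    fin_cases i <;> rfl
  have hli : LinearIndependent ℝ ![u₁, u₂] := by
    apply LinearIndependent.of_comp (restrictTo B)
    rw [hcomp]; exact hli_r
  set F := Submodule.span ℝ (Set.range ![u₁, u₂]) with hF
  have hFle : F ≤ funcsOn Ωbar := by
    rw [hF, Submodule.span_le]
    rintro x ⟨i, rfl⟩
    fin_cases i
    · exact hmem₁
    · exact hmem₂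
  have hFrank : Module.finrank ℝ ↥F = 2 := by
    rw [hF, finrank_span_eq_card hli]
    simp
  have hmap : F.map (restrictTo B) = Submodule.span ℝ (Set.range ![r₁, r₂]) := by
    rw [hF, Submodule.map_span, ← Set.range_comp, hcomp]
  have hFrank' : Module.finrank ℝ ↥(F.map (restrictTo B)) = 2 := by
    rw [hmap, finrank_span_eq_card hli_r]
    simp
  have hsup : ∀ r ∈ { r : ℝ | ∃ u ∈ F, restrictTo B u ≠ 0 ∧
      r = energy E' u / boundaryNorm B u }, r ≤ R := by
    rintro r ⟨u, huF, hru, rfl⟩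
    rw [hF, Submodule.mem_span_range_iff_exists_fun] at huF
    obtain ⟨c, hc⟩ := huF
    rw [Fin.sum_univ_two] at hc
    set a := c 0
    set b := c 1
    have hu : u = fun v => a * u₁ v + b * u₂ v := by
      rw [← hc]; funext v; simp [Matrix.cons_val_zero, Matrix.cons_val_one]
    have hEn : energy E' u = a ^ 2 * energy E' u₁ + b ^ 2 * energy E' u₂ := by
      rw [energy_eq_sum hE, energy_eq_sum hE, energy_eq_sum hE,
        Finset.mul_sum, Finset.mul_sum, ← Finset.sum_add_distrib]
      apply Finset.sum_congr rfl
      intro e he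
      have heE' : e ∈ E' := hE.mem_toFinset.mp he
      induction e using Sym2.ind with
      | _ i j =>
        rcases hedge _ heE' with h | h
        · have h1 : u₁ i = 0 := h i (Sym2.mem_mk_left i j)
          have h2 : u₁ j = 0 := h j (Sym2.mem_mk_right i j)
          rw [edgeEnergy_mk, edgeEnergy_mk, edgeEnergy_mk, hu]
          simp only [h1, h2]
          ring
        · have h1 : u₂ i = 0 := h i (Sym2.mem_mk_left i j)
          have h2 : u₂ j = 0 := h j (Sym2.mem_mk_right i j)
          rw [edgeEnergy_mk, edgeEnergy_mk, edgeEnergy_mk, hu]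
          simp only [h1, h2]
          ring
    have hBn : boundaryNorm B u = a ^ 2 * boundaryNorm B u₁ + b ^ 2 * boundaryNorm B u₂ := by
      rw [boundaryNorm_eq_sum hB, boundaryNorm_eq_sum hB, boundaryNorm_eq_sum hB,
        Finset.mul_sum, Finset.mul_sum, ← Finset.sum_add_distrib]
      apply Finset.sum_congr rfl
      intro i hi
      have hiB : i ∈ B := hB.mem_toFinset.mp hi
      rcases hbd i hiB with h | h <;> rw [hu] <;> simp only [h] <;> ring
    have hab : a ≠ 0 ∨ b ≠ 0 := by
      by_contra h
      push_neg at h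
      apply hru
      rw [hu, h.1, h.2]
      funext i
      simp [restrictTo_apply]
    have hBnpos : 0 < boundaryNorm B u := by
      rw [hBn]
      rcases hab with h | h
      · have : 0 < a ^ 2 * boundaryNorm B u₁ := by positivity
        nlinarith [boundaryNorm_nonneg hB u₂, sq_nonneg b]
      · have : 0 < b ^ 2 * boundaryNorm B u₂ := by positivity
        nlinarith [boundaryNorm_nonneg hB u₁, sq_nonneg a]
    rw [div_le_iff₀ hBnpos, hEn, hBn]
    nlinarith [sq_nonneg a, sq_nonneg b, hE₁, hE₂]
  have hmemT : (sSup { r : ℝ | ∃ u ∈ F, restrictTo B u ≠ 0 ∧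
      r = energy E' u / boundaryNorm B u }) ∈
      { t : ℝ | ∃ F : Submodule ℝ (V → ℝ), F ≤ funcsOn Ωbar ∧
        Module.finrank ℝ ↥F = 1 + 1 ∧
        Module.finrank ℝ ↥(F.map (restrictTo B)) = 1 + 1 ∧
        t = sSup { r : ℝ | ∃ u ∈ F, restrictTo B u ≠ 0 ∧
          r = energy E' u / boundaryNorm B u } } :=
    ⟨F, hFle, hFrank, hFrank', rfl⟩
  have hbdd : BddBelow { t : ℝ | ∃ F : Submodule ℝ (V → ℝ), F ≤ funcsOn Ωbar ∧
        Module.finrank ℝ ↥F = 1 + 1 ∧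
        Module.finrank ℝ ↥(F.map (restrictTo B)) = 1 + 1 ∧
        t = sSup { r : ℝ | ∃ u ∈ F, restrictTo B u ≠ 0 ∧
          r = energy E' u / boundaryNorm B u } } := by
    refine ⟨0, ?_⟩
    rintro t ⟨F', _, _, _, rfl⟩
    apply Real.sSup_nonneg
    rintro r ⟨u, _, _, rfl⟩
    exact div_nonneg (energy_nonneg hE u) (boundaryNorm_nonneg hB u)
  calc steklov E' Ωbar B 1 ≤ sSup { r : ℝ | ∃ u ∈ F, restrictTo B u ≠ 0 ∧
      r = energy E' u / boundaryNorm B u } := csInf_le hbdd hmemT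
    _ ≤ R := Real.sSup_le hsup hR

/-- If `B` has at most one point, there is no valid 2-dimensional test space,
so the (junk-value) Steklov eigenvalue is `0`. -/
lemma steklov_eq_zero_of_small_boundary (E' : Set (Sym2 V)) (Ωbar B : Set V)
    (hB : B.Finite) (hcard : B.ncard ≤ 1) :
    steklov E' Ωbar B 1 = 0 := by
  classical
  have hT : { t : ℝ | ∃ F : Submodule ℝ (V → ℝ), F ≤ funcsOn Ωbar ∧
      Module.finrank ℝ ↥F = 1 + 1 ∧
      Module.finrank ℝ ↥(F.map (restrictTo B)) = 1 + 1 ∧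
      t = sSup { r : ℝ | ∃ u ∈ F, restrictTo B u ≠ 0 ∧
        r = energy E' u / boundaryNorm B u } } = ∅ := by
    rw [Set.eq_empty_iff_forall_notMem]
    rintro t ⟨F, _, _, hrank, _⟩
    letI : Fintype ↥B := hB.fintype
    have hle : Module.finrank ℝ ↥(F.map (restrictTo B)) ≤
        Module.finrank ℝ (↥B → ℝ) := Submodule.finrank_le _
    have hpi : Module.finrank ℝ (↥B → ℝ) = B.ncard := by
      rw [Module.finrank_pi]
      rw [← Nat.card_coe_set_eq, Nat.card_eq_fintype_card]
    omega
  rw [steklov, hT, Real.sInf_empty]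

/-- clamp to `[0,1]` -/
noncomputable def clamp (a : ℝ) : ℝ := max 0 (min 1 a)

lemma clamp_nonneg (a : ℝ) : 0 ≤ clamp a := le_max_left _ _

lemma clamp_le_one (a : ℝ) : clamp a ≤ 1 := by
  rw [clamp, max_le_iff]
  exact ⟨zero_le_one, min_le_left _ _⟩

lemma clamp_eq_one (a : ℝ) (h : 1 ≤ a) : clamp a = 1 := by
  rw [clamp, min_eq_left h, max_eq_right zero_le_one]

lemma clamp_eq_zero (a : ℝ) (h : a ≤ 0) : clamp a = 0 := by
  rw [clamp, max_eq_left]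
  exact le_trans (min_le_right _ _) h

lemma clamp_lip (a b : ℝ) : |clamp a - clamp b| ≤ |a - b| := by
  rw [clamp, clamp, max_comm 0 (min 1 a), max_comm 0 (min 1 b)]
  refine le_trans (abs_max_sub_max_le_abs _ _ _) ?_
  have := abs_min_sub_min_le_max 1 a 1 b
  simpa using this

/-- the key exponent arithmetic: `min(n, ρ^D)/ρ² ≤ max(1, n^((D-2)/D))`. -/
lemma min_div_le_M (D n ρ : ℕ) (hD : 1 ≤ D) (hn : 1 ≤ n) (hρ : 1 ≤ ρ) :
    min ((n : ℝ)) ((ρ : ℝ) ^ D) / (ρ : ℝ) ^ 2 ≤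
      max 1 ((n : ℝ) ^ (((D : ℝ) - 2) / (D : ℝ))) := by
  have hρR : (1 : ℝ) ≤ (ρ : ℝ) := by exact_mod_cast hρ
  have hnR : (1 : ℝ) ≤ (n : ℝ) := by exact_mod_cast hn
  have hρ2 : (0 : ℝ) < (ρ : ℝ) ^ 2 := by positivity
  have hDR : (0 : ℝ) < (D : ℝ) := by exact_mod_cast hD
  rcases le_or_gt D 2 with hD2 | hD2
  · apply le_trans _ (le_max_left _ _)
    rw [div_le_one hρ2]
    calc min ((n : ℝ)) ((ρ : ℝ) ^ D) ≤ (ρ : ℝ) ^ D := min_le_right _ _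
      _ ≤ (ρ : ℝ) ^ 2 := pow_le_pow_right₀ hρR hD2
  · have hexp : (0 : ℝ) ≤ ((D : ℝ) - 2) / (D : ℝ) := by
      have : (2:ℝ) ≤ (D:ℝ) := by exact_mod_cast hD2.le
      apply div_nonneg (by linarith) hDR.le
    apply le_trans _ (le_max_right _ _)
    rcases min_cases ((n : ℝ)) ((ρ : ℝ) ^ D) with ⟨hmin, hle⟩ | ⟨hmin, hle⟩
    · rw [hmin, div_le_iff₀ hρ2]
      have h1 : (n : ℝ) ^ ((1 : ℝ) / D) ≤ (ρ : ℝ) := by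
        have := Real.rpow_le_rpow (by positivity) hle (by positivity : (0:ℝ) ≤ 1 / D)
        rwa [← Real.rpow_natCast (ρ : ℝ) D, ← Real.rpow_mul (by positivity),
          mul_one_div, div_self hDR.ne', Real.rpow_one] at this
      have h2 : (n : ℝ) ^ ((2 : ℝ) / D) ≤ (ρ : ℝ) ^ 2 := by
        have h := mul_le_mul h1 h1 (by positivity) (by positivity)
        rw [← Real.rpow_add (by positivity)] at h
        have harg : (1 : ℝ) / ↑D + 1 / ↑D = 2 / ↑D := by ring
        rw [harg] at h
        calc (n : ℝ) ^ ((2:ℝ) / D) ≤ (ρ : ℝ) * (ρ : ℝ) := h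
          _ = (ρ : ℝ) ^ 2 := (sq (ρ:ℝ)).symm
      calc (n : ℝ) = (n : ℝ) ^ (((D : ℝ) - 2) / D + 2 / D) := by
            rw [← add_div]
            have : (D : ℝ) - 2 + 2 = D := by ring
            rw [this, div_self hDR.ne', Real.rpow_one]
        _ = (n : ℝ) ^ (((D : ℝ) - 2) / D) * (n : ℝ) ^ ((2:ℝ) / D) := by
            rw [Real.rpow_add (by positivity)]
        _ ≤ (n : ℝ) ^ (((D : ℝ) - 2) / D) * (ρ : ℝ) ^ 2 := by
            apply mul_le_mul_of_nonneg_left h2 (by positivity)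
    · rw [hmin, div_le_iff₀ hρ2]
      have h1 : ((ρ : ℝ) ^ D) ^ (((D : ℝ) - 2) / D) ≤ (n : ℝ) ^ (((D : ℝ) - 2) / D) :=
        Real.rpow_le_rpow (by positivity) hle.le hexp
      have h2 : ((ρ : ℝ) ^ D) ^ (((D : ℝ) - 2) / D) = (ρ : ℝ) ^ ((D : ℝ) - 2) := by
        rw [← Real.rpow_natCast (ρ : ℝ) D, ← Real.rpow_mul (by positivity)]
        congr 1
        field_simp
      have h3 : (ρ : ℝ) ^ ((D : ℝ) - 2) * (ρ : ℝ) ^ (2:ℝ) = (ρ : ℝ) ^ (D:ℝ) := by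
        rw [← Real.rpow_add (by positivity)]
        norm_num
      calc (ρ : ℝ) ^ D = (ρ : ℝ) ^ ((D:ℝ)) := by
            rw [Real.rpow_natCast]
        _ = (ρ : ℝ) ^ ((D : ℝ) - 2) * (ρ : ℝ) ^ (2:ℝ) := h3.symm
        _ ≤ (n : ℝ) ^ (((D : ℝ) - 2) / D) * (ρ : ℝ) ^ (2:ℝ) := by
            apply mul_le_mul_of_nonneg_right _ (by positivity)
            rw [← h2]; exact h1
        _ = (n : ℝ) ^ (((D : ℝ) - 2) / D) * (ρ : ℝ) ^ 2 := by
            rw [Real.rpow_two]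

section Graph

variable {Γ : Type*} (G : SimpleGraph Γ)

/-- the ball of radius `N` around `x` -/
def gball (x : Γ) (N : ℕ) : Set Γ := {y | G.dist x y ≤ N}

lemma gball_mono (x : Γ) {N M : ℕ} (h : N ≤ M) : gball G x N ⊆ gball G x M :=
  fun _ hy => le_trans hy h

lemma self_mem_gball (x : Γ) (N : ℕ) : x ∈ gball G x N := by
  simp [gball, SimpleGraph.dist_self]

lemma adj_dist_succ (hconn : G.Connected) {v w : Γ} (h : G.Adj v w) (x : Γ) :
    G.dist x w ≤ G.dist x v + 1 := by
  refine le_trans (hconn.dist_triangle (v := v)) ?_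
  have : G.dist v w ≤ 1 := by
    have := SimpleGraph.dist_le (SimpleGraph.Walk.cons h SimpleGraph.Walk.nil)
    simpa using this
  omega

/-- balls are finite, given the polynomial lower growth bound -/
lemma gball_finite (D : ℕ) (C₀ : ℝ)
    (hgrowlow : ∀ (x : Γ) (N : ℕ), 1 ≤ N →
      C₀⁻¹ * (N : ℝ) ^ D ≤ ((gball G x N).ncard : ℝ))
    (hC₀ : 1 ≤ C₀) (x : Γ) (N : ℕ) : (gball G x N).Finite := by
  by_contra hinf
  have hinf' : (gball G x (max N 1)).Infinite := by
    intro hfin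
    exact hinf (hfin.subset (gball_mono G x (le_max_left _ _)))
  have h0 : ((gball G x (max N 1)).ncard : ℝ) = 0 := by
    rw [hinf'.ncard]; norm_num
  have hlow := hgrowlow x (max N 1) (le_max_right _ _)
  rw [h0] at hlow
  have h1 : (0:ℝ) < C₀⁻¹ * ((max N 1 : ℕ) : ℝ) ^ D := by
    have h2 : (0:ℝ) < ((max N 1 : ℕ) : ℝ) := by
      have : (1:ℕ) ≤ max N 1 := le_max_right _ _
      exact_mod_cast Nat.lt_of_lt_of_le Nat.zero_lt_one this
    have h3 : (0:ℝ) < C₀⁻¹ := by positivity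
    positivity
  linarith

/-- double counting pairs at distance ≤ r -/
lemma double_count [DecidableEq Γ] (A X : Finset Γ) (r : ℕ)
    [DecidablePred fun p : Γ × Γ => G.dist p.1 p.2 ≤ r] :
    ∑ z ∈ A, (X.filter fun x => G.dist z x ≤ r).card =
      ∑ x ∈ X, (A.filter fun z => G.dist z x ≤ r).card := by
  classical
  have key : ∀ (s t : Finset Γ),
      ∑ z ∈ s, (t.filter fun x => G.dist z x ≤ r).card =
        ∑ z ∈ s, ∑ x ∈ t, (if G.dist z x ≤ r then 1 else 0) := by
    intro s t
    apply Finset.sum_congr rfl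
    intro z _
    rw [Finset.card_filter]
  rw [key]
  rw [Finset.sum_comm]
  apply Finset.sum_congr rfl
  intro x _
  rw [Finset.card_filter]

/-- Counting bound for energies of localized functions. -/
lemma energy_le_count (Δ : ℕ)
    (hnbr : ∀ v : Γ, ∃ t : Finset Γ, (∀ w, G.Adj v w ↔ w ∈ t) ∧ t.card ≤ Δ)
    (Ω : Set Γ) (T : Set Γ) (hTfin : T.Finite)
    (hE'fin : (incidentEdges G Ω).Finite)
    (u : Γ → ℝ) (L : ℝ) (hL : 0 ≤ L)
    (hlip : ∀ e ∈ incidentEdges G Ω, edgeEnergy u e ≤ L)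
    (hzero : ∀ e ∈ incidentEdges G Ω, (∀ v ∈ e, v ∉ T) → edgeEnergy u e = 0) :
    energy (incidentEdges G Ω) u ≤ (Δ : ℝ) * (T.ncard : ℝ) * L := by
  classical
  set E' := incidentEdges G Ω with hE'
  set EF := hE'fin.toFinset with hEF
  set TF := hTfin.toFinset with hTF
  choose tv htv1 htv2 using hnbr
  rw [energy_eq_sum hE'fin]
  have hsplit : ∑ e ∈ EF, edgeEnergy u e =
      ∑ e ∈ EF.filter (fun e => ∃ v ∈ e, v ∈ T), edgeEnergy u e +
      ∑ e ∈ EF.filter (fun e => ¬ ∃ v ∈ e, v ∈ T), edgeEnergy u e :=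
    (Finset.sum_filter_add_sum_filter_not EF _ _).symm
  have hzero' : ∑ e ∈ EF.filter (fun e => ¬ ∃ v ∈ e, v ∈ T), edgeEnergy u e = 0 := by
    apply Finset.sum_eq_zero
    intro e he
    rw [Finset.mem_filter] at he
    obtain ⟨heEF, hne⟩ := he
    push_neg at hne
    exact hzero e (hE'fin.mem_toFinset.mp heEF) hne
  have hbound : ∑ e ∈ EF.filter (fun e => ∃ v ∈ e, v ∈ T), edgeEnergy u e ≤
      ((EF.filter (fun e => ∃ v ∈ e, v ∈ T)).card : ℝ) * L := by
    rw [← nsmul_eq_mul]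
    apply Finset.sum_le_card_nsmul
    intro e he
    rw [Finset.mem_filter] at he
    exact hlip e (hE'fin.mem_toFinset.mp he.1)
  have hcard : (EF.filter (fun e => ∃ v ∈ e, v ∈ T)).card ≤ TF.card * Δ := by
    have hsub : EF.filter (fun e => ∃ v ∈ e, v ∈ T) ⊆
        TF.biUnion (fun v => (tv v).image (fun w => s(v, w))) := by
      intro e he
      rw [Finset.mem_filter] at he
      obtain ⟨heEF, v, hve, hvT⟩ := he
      have heE' : e ∈ E' := hE'fin.mem_toFinset.mp heEF
      obtain ⟨hedge, -⟩ := heE'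
      rw [Finset.mem_biUnion]
      refine ⟨v, hTfin.mem_toFinset.mpr hvT, ?_⟩
      rw [Finset.mem_image]
      induction e using Sym2.ind with
      | _ a b =>
        have hadj : G.Adj a b := hedge
        rw [Sym2.mem_iff] at hve
        rcases hve with rfl | rfl
        · exact ⟨b, (htv1 v b).mp hadj, rfl⟩
        · exact ⟨a, (htv1 v a).mp hadj.symm, Sym2.eq_swap⟩
    calc (EF.filter (fun e => ∃ v ∈ e, v ∈ T)).card
        ≤ (TF.biUnion (fun v => (tv v).image (fun w => s(v, w)))).card :=
          Finset.card_le_card hsub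
      _ ≤ ∑ v ∈ TF, ((tv v).image (fun w => s(v, w))).card := Finset.card_biUnion_le
      _ ≤ ∑ v ∈ TF, Δ := by
          apply Finset.sum_le_sum
          intro v _
          exact le_trans Finset.card_image_le (htv2 v)
      _ = TF.card * Δ := by rw [Finset.sum_const, smul_eq_mul]
  have hTFcard : TF.card = T.ncard := by
    rw [hTF, Set.ncard_eq_toFinset_card T hTfin]
  rw [hsplit, hzero', add_zero]
  calc ∑ e ∈ EF.filter (fun e => ∃ v ∈ e, v ∈ T), edgeEnergy u e
      ≤ ((EF.filter (fun e => ∃ v ∈ e, v ∈ T)).card : ℝ) * L := hbound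
    _ ≤ ((TF.card * Δ : ℕ) : ℝ) * L := by
        apply mul_le_mul_of_nonneg_right _ hL
        exact_mod_cast hcard
    _ = (Δ : ℝ) * (T.ncard : ℝ) * L := by
        rw [hTFcard]
        push_cast
        ring

end Graph

section Cayley

variable {Γ : Type*} [Group Γ] (S : Finset Γ)
  (hS : ∀ s ∈ S, s⁻¹ ∈ S) (h1 : (1 : Γ) ∉ S)

lemma cayley_adj_iff (x y : Γ) :
    (cayleyGraph S hS h1).Adj x y ↔ ∃ s ∈ S, y = x * s := by
  constructor
  · intro h
    exact ⟨x⁻¹ * y, h, by group⟩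
  · rintro ⟨s, hs, rfl⟩
    show x⁻¹ * (x * s) ∈ S
    simpa using hs

lemma cayley_nbr_finset (v : Γ) :
    ∃ t : Finset Γ, (∀ w, (cayleyGraph S hS h1).Adj v w ↔ w ∈ t) ∧ t.card ≤ S.card := by
  classical
  refine ⟨S.image (fun s => v * s), ?_, Finset.card_image_le⟩
  intro w
  rw [cayley_adj_iff]
  simp only [Finset.mem_image]
  constructor
  · rintro ⟨s, hs, rfl⟩; exact ⟨s, hs, rfl⟩
  · rintro ⟨s, hs, rfl⟩; exact ⟨s, hs, rfl⟩

lemma cayley_reachable_mul (g x y : Γ)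
    (h : (cayleyGraph S hS h1).Reachable x y) :
    (cayleyGraph S hS h1).Reachable (g * x) (g * y) := by
  let φ : cayleyGraph S hS h1 ≃g cayleyGraph S hS h1 :=
    ⟨Equiv.mulLeft g, by
      intro a b
      show (g * a)⁻¹ * (g * b) ∈ S ↔ a⁻¹ * b ∈ S
      rw [mul_inv_rev, mul_assoc, inv_mul_cancel_left]⟩
  exact h.map φ.toHom

lemma cayley_connected (hgen : Subgroup.closure (S : Set Γ) = ⊤) :
    (cayleyGraph S hS h1).Connected := by
  rw [SimpleGraph.connected_iff]
  refine ⟨?_, ⟨1⟩⟩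
  have key : ∀ g : Γ, (cayleyGraph S hS h1).Reachable 1 g := by
    intro g
    have hg : g ∈ Subgroup.closure (S : Set Γ) := by rw [hgen]; trivial
    induction hg using Subgroup.closure_induction with
    | mem s hs =>
      apply SimpleGraph.Adj.reachable
      show (1 : Γ)⁻¹ * s ∈ S
      simpa using hs
    | one => exact SimpleGraph.Reachable.refl 1
    | mul x y hx hy ihx ihy =>
      refine ihx.trans ?_
      have := cayley_reachable_mul S hS h1 x 1 y ihy
      simpa using this
    | inv x hx ihx =>
      have := cayley_reachable_mul S hS h1 x⁻¹ 1 x ihx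
      simp only [mul_one, inv_mul_cancel] at this
      exact this.symm
  intro a b
  exact (key a).symm.trans (key b)

end Cayley





set_option maxHeartbeats 1000000 in
theorem main_estimate {Γ : Type*} (G : SimpleGraph Γ) (hconn : G.Connected)
    (Δ : ℕ) (hnbr : ∀ v : Γ, ∃ t : Finset Γ, (∀ w, G.Adj v w ↔ w ∈ t) ∧ t.card ≤ Δ)
    (D : ℕ) (hD : 1 ≤ D) (C₀ : ℝ) (hC₀ : 1 ≤ C₀)
    (hgrow : ∀ (x : Γ) (N : ℕ), 1 ≤ N →
      C₀⁻¹ * (N : ℝ) ^ D ≤ ((gball G x N).ncard : ℝ) ∧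
        ((gball G x N).ncard : ℝ) ≤ C₀ * (N : ℝ) ^ D)
    (Ω : Set Γ) (hΩfin : Ω.Finite) (hΩne : Ω.Nonempty) :
    steklov (incidentEdges G Ω) (Ω ∪ vertexBoundary G Ω) (vertexBoundary G Ω) 1 ≤
      4 * ((Δ : ℝ) + 1) ^ 2 * C₀ ^ 3 * 10 ^ D * 5 ^ D *
        max 1 ((Ω.ncard : ℝ) ^ (((D : ℝ) - 2) / (D : ℝ))) /
        ((vertexBoundary G Ω).ncard : ℝ) := by
  classical
  choose tv htv1 htv2 using hnbr
  have hnbr' : ∀ v : Γ, ∃ t : Finset Γ, (∀ w, G.Adj v w ↔ w ∈ t) ∧ t.card ≤ Δ :=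
    fun v => ⟨tv v, htv1 v, htv2 v⟩
  set B := vertexBoundary G Ω with hBdef
  set E' := incidentEdges G Ω with hE'def
  set Ωb := Ω ∪ B with hΩbdef
  have hballfin : ∀ (x : Γ) (N : ℕ), (gball G x N).Finite :=
    gball_finite G D C₀ (fun x N hN => (hgrow x N hN).1) hC₀
  have hBfin : B.Finite := by
    apply Set.Finite.subset (hΩfin.biUnion (fun v _ => (tv v).finite_toSet))
    rintro i ⟨hiΩ, j, hjΩ, hadj⟩
    exact Set.mem_biUnion hjΩ ((htv1 j i).mp hadj)
  have hE'fin : E'.Finite := by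
    apply Set.Finite.subset
      (hΩfin.biUnion (fun v _ => ((tv v).image (fun w => s(v, w))).finite_toSet))
    rintro e ⟨hedge, v, hvΩ, hve⟩
    apply Set.mem_biUnion hvΩ
    induction e using Sym2.ind with
    | _ a b =>
      have hadj : G.Adj a b := hedge
      rw [Sym2.mem_iff] at hve
      simp only [Finset.coe_image, Set.mem_image, Finset.mem_coe]
      rcases hve with rfl | rfl
      · exact ⟨b, (htv1 v b).mp hadj, rfl⟩
      · exact ⟨a, (htv1 v a).mp hadj.symm, Sym2.eq_swap⟩
  have hΩsub : Ω ⊆ Ωb := Set.subset_union_left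
  have hBsub : B ⊆ Ωb := Set.subset_union_right
  have hends : ∀ e ∈ E', ∀ z ∈ e, z ∈ Ωb := by
    intro e he
    obtain ⟨hedge, v, hvΩ, hve⟩ := he
    induction e using Sym2.ind with
    | _ a b =>
      intro z hz
      have hadj : G.Adj a b := hedge
      rw [Sym2.mem_iff] at hz hve
      by_cases hzΩ : z ∈ Ω
      · exact hΩsub hzΩ
      · refine hBsub ⟨hzΩ, v, hvΩ, ?_⟩
        rcases hz with rfl | rfl <;> rcases hve with rfl | rfl
        · exact absurd hvΩ hzΩ
        · exact hadj.symm
        · exact hadj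
        · exact absurd hvΩ hzΩ
  have hn1 : 0 < Ω.ncard := (Set.ncard_pos hΩfin).mpr hΩne
  have hnR : (1:ℝ) ≤ (Ω.ncard : ℝ) := by exact_mod_cast hn1
  set K : ℝ := C₀ ^ 2 * 10 ^ D with hKdef
  have h10D : (1:ℝ) ≤ 10 ^ D := one_le_pow₀ (by norm_num)
  have h5D : (1:ℝ) ≤ 5 ^ D := one_le_pow₀ (by norm_num)
  have h510 : ((5:ℝ)) ^ D ≤ 10 ^ D := pow_le_pow_left₀ (by norm_num) (by norm_num) D
  have hC₀pos : (0:ℝ) < C₀ := lt_of_lt_of_le one_pos hC₀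
  have hK1 : (1:ℝ) ≤ K := by nlinarith
  have hKpos : (0:ℝ) < K := lt_of_lt_of_le one_pos hK1
  set Mn : ℝ := max 1 ((Ω.ncard : ℝ) ^ (((D : ℝ) - 2) / (D : ℝ))) with hMndef
  have hMn1 : (1:ℝ) ≤ Mn := le_max_left _ _
  have hMn0 : (0:ℝ) ≤ Mn := le_trans zero_le_one hMn1
  set C : ℝ := 4 * ((Δ : ℝ) + 1) ^ 2 * C₀ ^ 3 * 10 ^ D * 5 ^ D with hCdef
  have hCpos : (0:ℝ) < C := by positivity
  have hCK : C / (2*K) = 2*((Δ:ℝ)+1)^2*C₀*5^D := by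
    rw [hCdef, hKdef]
    field_simp
    ring
  by_cases hb1 : B.ncard ≤ 1
  · rw [steklov_eq_zero_of_small_boundary E' Ωb B hBfin hb1]
    apply div_nonneg (mul_nonneg hCpos.le hMn0) (by positivity)
  push_neg at hb1
  have hb2 : 2 ≤ B.ncard := hb1
  have hbpos : (0:ℝ) < (B.ncard : ℝ) := by
    have : (0:ℕ) < B.ncard := by omega
    exact_mod_cast this
  have hR0 : (0:ℝ) ≤ C * Mn / (B.ncard : ℝ) :=
    div_nonneg (mul_nonneg hCpos.le hMn0) hbpos.le
  rcases le_or_gt ((B.ncard : ℝ)) (2 * K) with hsmall | hbig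
  · -- SMALL CASE: boundary of bounded size, use two indicator functions
    obtain ⟨p, q, hpB, hqB, hpq⟩ := (Set.one_lt_ncard_iff hBfin).mp hb1
    have hindmem : ∀ r ∈ B, (fun v => if v = r then (1:ℝ) else 0) ∈ funcsOn Ωb := by
      intro r hrB
      rw [mem_funcsOn]
      intro v hv
      show (if v = r then (1:ℝ) else 0) = 0
      rw [if_neg]
      rintro rfl
      exact hv (hBsub hrB)
    have hN : ∀ r ∈ B, (1:ℝ) ≤ boundaryNorm B (fun v => if v = r then (1:ℝ) else 0) := by
      intro r hrB
      rw [boundaryNorm_eq_sum hBfin]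
      have h := Finset.single_le_sum (f := fun i => (if i = r then (1:ℝ) else 0) ^ 2)
        (fun i _ => by positivity) (hBfin.mem_toFinset.mpr hrB)
      simpa using h
    have hEn : ∀ r ∈ B, energy E' (fun v => if v = r then (1:ℝ) else 0) ≤
        (Δ:ℝ) * ((Δ:ℝ) + 1) := by
      intro r hrB
      have hrΩ : r ∉ Ω := hrB.1
      have hTfin : (Ω ∩ gball G r 1).Finite := hΩfin.inter_of_left _
      have hlip : ∀ e ∈ E', edgeEnergy (fun v => if v = r then (1:ℝ) else 0) e ≤ 1 := by
        intro e _
        induction e using Sym2.ind with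
        | _ a b =>
          rw [edgeEnergy_mk]
          have h₁ : ∀ z : Γ, (0:ℝ) ≤ (if z = r then (1:ℝ) else 0) ∧
              (if z = r then (1:ℝ) else 0) ≤ 1 := fun z => by split_ifs <;> norm_num
          nlinarith [(h₁ a).1, (h₁ a).2, (h₁ b).1, (h₁ b).2]
      have hzero : ∀ e ∈ E', (∀ v ∈ e, v ∉ Ω ∩ gball G r 1) →
          edgeEnergy (fun v => if v = r then (1:ℝ) else 0) e = 0 := by
        intro e he hnot
        obtain ⟨hedge, v, hvΩ, hve⟩ := he
        induction e using Sym2.ind with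
        | _ a b =>
          have hadj : G.Adj a b := hedge
          rw [Sym2.mem_iff] at hve
          have hkey : a ≠ r ∧ b ≠ r := by
            constructor
            · rintro rfl
              rcases hve with rfl | rfl
              · exact hrΩ hvΩ
              · refine hnot v (Sym2.mem_mk_right _ _) ⟨hvΩ, ?_⟩
                show G.dist a v ≤ 1
                have := adj_dist_succ G hconn hadj a
                have h0 : G.dist a a = 0 := SimpleGraph.dist_self
                omega
            · rintro rfl
              rcases hve with rfl | rfl
              · refine hnot v (Sym2.mem_mk_left _ _) ⟨hvΩ, ?_⟩
                show G.dist b v ≤ 1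
                have := adj_dist_succ G hconn hadj.symm b
                have h0 : G.dist b b = 0 := SimpleGraph.dist_self
                omega
              · exact hrΩ hvΩ
          rw [edgeEnergy_mk]
          simp only [if_neg hkey.1, if_neg hkey.2]
          ring
      have hE := energy_le_count G Δ hnbr' Ω (Ω ∩ gball G r 1) hTfin hE'fin
        (fun v => if v = r then (1:ℝ) else 0) 1 zero_le_one hlip hzero
      have hTcard : ((Ω ∩ gball G r 1).ncard : ℝ) ≤ (Δ:ℝ) + 1 := by
        have hsub : Ω ∩ gball G r 1 ⊆ insert r (↑(tv r) : Set Γ) := by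
          rintro y ⟨hyΩ, hyball⟩
          have hd : G.dist r y ≤ 1 := hyball
          rcases Nat.le_one_iff_eq_zero_or_eq_one.mp hd with h0 | h1
          · left
            exact (hconn.dist_eq_zero_iff.mp h0).symm
          · right
            exact (htv1 r y).mp (SimpleGraph.dist_eq_one_iff_adj.mp h1)
        have h1 : (Ω ∩ gball G r 1).ncard ≤ (insert r (↑(tv r) : Set Γ)).ncard :=
          Set.ncard_le_ncard hsub (((tv r).finite_toSet).insert r)
        have h2 : (insert r (↑(tv r) : Set Γ)).ncard ≤ (↑(tv r) : Set Γ).ncard + 1 :=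
          Set.ncard_insert_le r _
        have h3 : (↑(tv r) : Set Γ).ncard = (tv r).card := Set.ncard_coe_finset _
        have h4 : (tv r).card ≤ Δ := htv2 r
        have : (Ω ∩ gball G r 1).ncard ≤ Δ + 1 := by omega
        exact_mod_cast this
      calc energy E' (fun v => if v = r then (1:ℝ) else 0)
          ≤ (Δ:ℝ) * ((Ω ∩ gball G r 1).ncard : ℝ) * 1 := hE
        _ = (Δ:ℝ) * ((Ω ∩ gball G r 1).ncard : ℝ) := by ring
        _ ≤ (Δ:ℝ) * ((Δ:ℝ) + 1) := by
            apply mul_le_mul_of_nonneg_left hTcard (by positivity)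
    have hRge : (Δ:ℝ) * ((Δ:ℝ) + 1) ≤ C * Mn / (B.ncard:ℝ) * 1 := by
      rw [mul_one, le_div_iff₀ hbpos]
      have h1 : (Δ:ℝ)*((Δ:ℝ)+1) * (B.ncard:ℝ) ≤ (Δ:ℝ)*((Δ:ℝ)+1) * (2*K) := by
        apply mul_le_mul_of_nonneg_left hsmall (by positivity)
      have h2 : (Δ:ℝ)*((Δ:ℝ)+1) * (2*K) ≤ C * Mn := by
        have hCeq : C = 2*K*(2*((Δ:ℝ)+1)^2*C₀*5^D) := by rw [hCdef, hKdef]; ring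
        have hd0 : (0:ℝ) ≤ (Δ:ℝ) := Nat.cast_nonneg Δ
        have e1 : (Δ:ℝ)*((Δ:ℝ)+1) ≤ 2*((Δ:ℝ)+1)^2 := by nlinarith
        have e2 : (1:ℝ) ≤ C₀*5^D := by
          calc (1:ℝ) = 1*1 := by ring
            _ ≤ C₀*5^D := mul_le_mul hC₀ h5D zero_le_one hC₀pos.le
        have e3 : 2*((Δ:ℝ)+1)^2 * 1 ≤ 2*((Δ:ℝ)+1)^2 * (C₀*5^D) :=
          mul_le_mul_of_nonneg_left e2 (by positivity)
        have h3 : (Δ:ℝ)*((Δ:ℝ)+1) ≤ 2*((Δ:ℝ)+1)^2*C₀*5^D := by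
          calc (Δ:ℝ)*((Δ:ℝ)+1) ≤ 2*((Δ:ℝ)+1)^2 := e1
            _ = 2*((Δ:ℝ)+1)^2 * 1 := by ring
            _ ≤ 2*((Δ:ℝ)+1)^2 * (C₀*5^D) := e3
            _ = 2*((Δ:ℝ)+1)^2*C₀*5^D := by ring
        calc (Δ:ℝ)*((Δ:ℝ)+1)*(2*K) ≤ (2*((Δ:ℝ)+1)^2*C₀*5^D)*(2*K) := by
              apply mul_le_mul_of_nonneg_right h3 (by positivity)
          _ = C * 1 := by rw [hCeq]; ring
          _ ≤ C * Mn := by apply mul_le_mul_of_nonneg_left hMn1 hCpos.le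
      linarith
    apply steklov_le_of_pair E' Ωb B hE'fin hBfin _ _ _ hR0
      (hindmem p hpB) (hindmem q hqB)
    · -- hedge
      intro e he
      by_cases hpe : p ∈ e
      · right
        intro z hz
        show (if z = q then (1:ℝ) else 0) = 0
        rw [if_neg]
        rintro rfl
        obtain ⟨hedge, v, hvΩ, hve⟩ := he
        induction e using Sym2.ind with
        | _ a b =>
          rw [Sym2.mem_iff] at hpe hz hve
          have hpΩ : p ∉ Ω := hpB.1
          have hqΩ : z ∉ Ω := hqB.1
          rcases hpe with rfl | rfl
          · rcases hz with hq | rfl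
            · exact hpq hq.symm
            · rcases hve with rfl | rfl
              · exact hpΩ hvΩ
              · exact hqΩ hvΩ
          · rcases hz with rfl | hq
            · rcases hve with rfl | rfl
              · exact hqΩ hvΩ
              · exact hpΩ hvΩ
            · exact hpq hq.symm
      · left
        intro z hz
        show (if z = p then (1:ℝ) else 0) = 0
        rw [if_neg]
        rintro rfl
        exact hpe hz
    · -- hbd
      intro i hiB
      rcases eq_or_ne i q with rfl | hne
      · left
        show (if i = p then (1:ℝ) else 0) = 0
        rw [if_neg]
        rintro rfl
        exact hpq rfl
      · right
        show (if i = q then (1:ℝ) else 0) = 0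
        rw [if_neg hne]
    · exact lt_of_lt_of_le one_pos (hN p hpB)
    · exact lt_of_lt_of_le one_pos (hN q hqB)
    · calc energy E' _ ≤ (Δ:ℝ) * ((Δ:ℝ)+1) := hEn p hpB
        _ ≤ C * Mn / (B.ncard:ℝ) * 1 := hRge
        _ ≤ C * Mn / (B.ncard:ℝ) * boundaryNorm B _ := by
            apply mul_le_mul_of_nonneg_left (hN p hpB) hR0
    · calc energy E' _ ≤ (Δ:ℝ) * ((Δ:ℝ)+1) := hEn q hqB
        _ ≤ C * Mn / (B.ncard:ℝ) * 1 := hRge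
        _ ≤ C * Mn / (B.ncard:ℝ) * boundaryNorm B _ := by
            apply mul_le_mul_of_nonneg_left (hN q hqB) hR0
  · -- MAIN CASE : 2K < b
    have hBne : B.Nonempty := by
      rw [← Set.ncard_pos hBfin]; omega
    obtain ⟨x₀, hx₀B⟩ := hBne
    have hνfin : ∀ (x : Γ) (r : ℕ), (B ∩ gball G x r).Finite :=
      fun x r => hBfin.inter_of_left _
    have hPex' : ∃ r : ℕ, ∃ x : Γ,
        (B.ncard : ℝ) ≤ 2 * K * ((B ∩ gball G x r).ncard : ℝ) := by
      refine ⟨hBfin.toFinset.sup (G.dist x₀), x₀, ?_⟩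
      have hsub : B ⊆ gball G x₀ (hBfin.toFinset.sup (G.dist x₀)) := by
        intro z hz
        exact Finset.le_sup (f := G.dist x₀) (hBfin.mem_toFinset.mpr hz)
      rw [Set.inter_eq_self_of_subset_left hsub]
      nlinarith [hbpos.le]
    set ρ := Nat.find hPex' with hρdef
    obtain ⟨x₁, hx₁⟩ := Nat.find_spec hPex'
    have hP0 : ¬ ∃ x : Γ, (B.ncard : ℝ) ≤ 2 * K * ((B ∩ gball G x 0).ncard : ℝ) := by
      rintro ⟨x, hx⟩
      have hsub : B ∩ gball G x 0 ⊆ {x} := by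
        rintro y ⟨-, hy⟩
        have hy0 : G.dist x y = 0 := Nat.le_zero.mp hy
        exact Set.mem_singleton_iff.mpr (hconn.dist_eq_zero_iff.mp hy0).symm
      have hle : (B ∩ gball G x 0).ncard ≤ 1 := by
        have := Set.ncard_le_ncard hsub (Set.finite_singleton x)
        simpa [Set.ncard_singleton] using this
      have : ((B ∩ gball G x 0).ncard : ℝ) ≤ 1 := by exact_mod_cast hle
      nlinarith
    have hρ1 : 1 ≤ ρ := by
      show 0 < ρ
      rw [hρdef]
      exact (Nat.find_pos hPex').mpr hP0
    have hmin : ∀ x : Γ, 2 * K * ((B ∩ gball G x (ρ - 1)).ncard : ℝ) < (B.ncard : ℝ) := by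
      intro x
      have hlt : ρ - 1 < ρ := by omega
      have hmin' := Nat.find_min hPex' (by rw [← hρdef]; exact hlt)
      push_neg at hmin'
      exact hmin' x
    have hρR : (1:ℝ) ≤ (ρ:ℝ) := by exact_mod_cast hρ1
    have hρpos : (0:ℝ) < (ρ:ℝ) := by linarith
    -- covering bound : at most half the boundary lies in the ball of radius 4ρ
    set A : Set Γ := B ∩ gball G x₁ (4 * ρ) with hAdef
    have hAfin : A.Finite := hBfin.inter_of_left _
    set XS : Set Γ := gball G x₁ (5 * ρ) with hXdef
    have hXfin : XS.Finite := hballfin x₁ (5 * ρ)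
    have hAX : A ⊆ XS := by
      rintro z ⟨-, hz⟩
      have hz' : G.dist x₁ z ≤ 4 * ρ := hz
      show G.dist x₁ z ≤ 5 * ρ
      omega
    have hXcard : ((XS.ncard : ℝ)) ≤ C₀ * ((5 * ρ : ℕ) : ℝ) ^ D :=
      (hgrow x₁ (5 * ρ) (by omega)).2
    have hDC := double_count G hAfin.toFinset hXfin.toFinset (ρ - 1)
    have hup : ∀ x ∈ hXfin.toFinset,
        ((hAfin.toFinset.filter fun z => G.dist z x ≤ ρ - 1).card : ℝ) ≤
          (B.ncard : ℝ) / (2 * K) := by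
      intro x _
      have hsub : (hAfin.toFinset.filter fun z => G.dist z x ≤ ρ - 1) ⊆
          (hνfin x (ρ - 1)).toFinset := by
        intro z hz
        rw [Finset.mem_filter] at hz
        obtain ⟨hzA, hzd⟩ := hz
        rw [Set.Finite.mem_toFinset]
        refine ⟨(hAfin.mem_toFinset.mp hzA).1, ?_⟩
        show G.dist x z ≤ ρ - 1
        rw [SimpleGraph.dist_comm]
        exact hzd
      have hcard : (hAfin.toFinset.filter fun z => G.dist z x ≤ ρ - 1).card ≤
          (B ∩ gball G x (ρ - 1)).ncard := by
        have h := Finset.card_le_card hsub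
        rwa [Set.ncard_eq_toFinset_card _ (hνfin x (ρ - 1))]
      have hm := hmin x
      have hlt : ((B ∩ gball G x (ρ - 1)).ncard : ℝ) < (B.ncard : ℝ) / (2 * K) := by
        rw [lt_div_iff₀ (by positivity)]
        nlinarith
      calc ((hAfin.toFinset.filter fun z => G.dist z x ≤ ρ - 1).card : ℝ)
          ≤ ((B ∩ gball G x (ρ - 1)).ncard : ℝ) := by exact_mod_cast hcard
        _ ≤ (B.ncard : ℝ) / (2 * K) := hlt.le
    have hsumR : (∑ x ∈ hXfin.toFinset,
        ((hAfin.toFinset.filter fun z => G.dist z x ≤ ρ - 1).card : ℝ)) ≤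
        C₀ * ((5 * ρ : ℕ) : ℝ) ^ D * ((B.ncard : ℝ) / (2 * K)) := by
      calc (∑ x ∈ hXfin.toFinset,
          ((hAfin.toFinset.filter fun z => G.dist z x ≤ ρ - 1).card : ℝ))
          ≤ ∑ _x ∈ hXfin.toFinset, (B.ncard : ℝ) / (2 * K) :=
            Finset.sum_le_sum hup
        _ = (hXfin.toFinset.card : ℝ) * ((B.ncard : ℝ) / (2 * K)) := by
            rw [Finset.sum_const, nsmul_eq_mul]
        _ ≤ C₀ * ((5 * ρ : ℕ) : ℝ) ^ D * ((B.ncard : ℝ) / (2 * K)) := by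
            apply mul_le_mul_of_nonneg_right _ (by positivity)
            rw [← Set.ncard_eq_toFinset_card XS hXfin]
            exact hXcard
    have hDCle : ∀ w : ℝ, 0 ≤ w →
        (∀ z ∈ hAfin.toFinset,
          w ≤ ((hXfin.toFinset.filter fun x => G.dist z x ≤ ρ - 1).card : ℝ)) →
        (A.ncard : ℝ) * w ≤ C₀ * ((5 * ρ : ℕ) : ℝ) ^ D * ((B.ncard : ℝ) / (2 * K)) := by
      intro w hw hlow
      have hsumL : (hAfin.toFinset.card : ℝ) * w ≤
          ∑ z ∈ hAfin.toFinset,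
            ((hXfin.toFinset.filter fun x => G.dist z x ≤ ρ - 1).card : ℝ) := by
        calc (hAfin.toFinset.card : ℝ) * w = ∑ _z ∈ hAfin.toFinset, w := by
              rw [Finset.sum_const, nsmul_eq_mul]
          _ ≤ _ := Finset.sum_le_sum hlow
      have hcast : (∑ z ∈ hAfin.toFinset,
          ((hXfin.toFinset.filter fun x => G.dist z x ≤ ρ - 1).card : ℝ)) =
          ∑ x ∈ hXfin.toFinset,
            ((hAfin.toFinset.filter fun z => G.dist z x ≤ ρ - 1).card : ℝ) := by
        exact_mod_cast congrArg (Nat.cast (R := ℝ)) hDC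
      rw [Set.ncard_eq_toFinset_card A hAfin]
      calc (hAfin.toFinset.card : ℝ) * w
          ≤ ∑ z ∈ hAfin.toFinset,
            ((hXfin.toFinset.filter fun x => G.dist z x ≤ ρ - 1).card : ℝ) := hsumL
        _ = ∑ x ∈ hXfin.toFinset,
            ((hAfin.toFinset.filter fun z => G.dist z x ≤ ρ - 1).card : ℝ) := hcast
        _ ≤ _ := hsumR
    have hAcard : ((A.ncard : ℝ)) ≤ (B.ncard : ℝ) / 2 := by
      rcases Nat.lt_or_ge ρ 2 with hρlt | hρ2
      · -- ρ = 1
        have hρeq : ρ = 1 := by omega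
        have h := hDCle 1 zero_le_one ?_
        · rw [mul_one] at h
          have hKge : C₀ * ((5 * ρ : ℕ) : ℝ) ^ D ≤ K := by
            rw [hρeq, hKdef]
            have : ((5 * 1 : ℕ) : ℝ) = 5 := by norm_num
            rw [this]
            nlinarith
          calc ((A.ncard : ℝ)) ≤ C₀ * ((5 * ρ : ℕ) : ℝ) ^ D * ((B.ncard : ℝ) / (2 * K)) := h
            _ ≤ K * ((B.ncard : ℝ) / (2 * K)) := by
                apply mul_le_mul_of_nonneg_right hKge (by positivity)
            _ = (B.ncard : ℝ) / 2 := by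
                field_simp
        · intro z hzA
          have hzX : z ∈ hXfin.toFinset := by
            rw [Set.Finite.mem_toFinset] at hzA ⊢
            exact hAX hzA
          have hmem : z ∈ hXfin.toFinset.filter fun x => G.dist z x ≤ ρ - 1 := by
            rw [Finset.mem_filter]
            refine ⟨hzX, ?_⟩
            rw [SimpleGraph.dist_self]
            omega
          have hpos : 0 < (hXfin.toFinset.filter fun x => G.dist z x ≤ ρ - 1).card :=
            Finset.card_pos.mpr ⟨z, hmem⟩
          exact_mod_cast hpos
      · -- ρ ≥ 2
        have hw0 : (0:ℝ) < C₀⁻¹ * ((ρ - 1 : ℕ) : ℝ) ^ D := by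
          have : (0:ℝ) < ((ρ - 1 : ℕ) : ℝ) := by
            have : 1 ≤ ρ - 1 := by omega
            exact_mod_cast Nat.lt_of_lt_of_le Nat.zero_lt_one this
          positivity
        have h := hDCle (C₀⁻¹ * ((ρ - 1 : ℕ) : ℝ) ^ D) hw0.le ?_
        · -- conclude
          have hkey : C₀ * ((5 * ρ : ℕ) : ℝ) ^ D * ((B.ncard : ℝ) / (2 * K)) ≤
              ((B.ncard : ℝ) / 2) * (C₀⁻¹ * ((ρ - 1 : ℕ) : ℝ) ^ D) := by
            have hle510 : ((5 * ρ : ℕ) : ℝ) ≤ 10 * ((ρ - 1 : ℕ) : ℝ) := by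
              push_cast [Nat.cast_sub (by omega : 1 ≤ ρ)]
              have : (2:ℝ) ≤ (ρ:ℝ) := by exact_mod_cast hρ2
              linarith
            have hpow : ((5 * ρ : ℕ) : ℝ) ^ D ≤ (10 * ((ρ - 1 : ℕ) : ℝ)) ^ D :=
              pow_le_pow_left₀ (by positivity) hle510 D
            have hQP : ((5 * ρ : ℕ) : ℝ) ^ D ≤ 10 ^ D * ((ρ - 1 : ℕ) : ℝ) ^ D := by
              rw [← mul_pow]
              exact hpow
            have hstep : C₀ * ((5 * ρ : ℕ) : ℝ) ^ D ≤ K * (C₀⁻¹ * ((ρ - 1 : ℕ) : ℝ) ^ D) := by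
              have heq : K * (C₀⁻¹ * ((ρ - 1 : ℕ) : ℝ) ^ D) =
                  C₀ * (10 ^ D * ((ρ - 1 : ℕ) : ℝ) ^ D) := by
                rw [hKdef]
                field_simp
              rw [heq]
              exact mul_le_mul_of_nonneg_left hQP hC₀pos.le
            calc C₀ * ((5 * ρ : ℕ) : ℝ) ^ D * ((B.ncard : ℝ) / (2 * K))
                ≤ K * (C₀⁻¹ * ((ρ - 1 : ℕ) : ℝ) ^ D) * ((B.ncard : ℝ) / (2 * K)) := by
                  apply mul_le_mul_of_nonneg_right hstep (by positivity)
              _ = ((B.ncard : ℝ) / 2) * (C₀⁻¹ * ((ρ - 1 : ℕ) : ℝ) ^ D) := by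
                  field_simp
          have h2 := le_trans h hkey
          exact le_of_mul_le_mul_right h2 hw0
        · intro z hzA
          have hsub : (hballfin z (ρ - 1)).toFinset ⊆
              hXfin.toFinset.filter fun x => G.dist z x ≤ ρ - 1 := by
            intro y hy
            rw [Set.Finite.mem_toFinset] at hy
            have hy' : G.dist z y ≤ ρ - 1 := hy
            rw [Finset.mem_filter, Set.Finite.mem_toFinset]
            constructor
            · have hzA' : z ∈ A := hAfin.mem_toFinset.mp hzA
              have h1 : G.dist x₁ z ≤ 4 * ρ := hzA'.2
              have h2 : G.dist x₁ y ≤ G.dist x₁ z + G.dist z y := hconn.dist_triangle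
              show G.dist x₁ y ≤ 5 * ρ
              omega
            · exact hy'
          have hlow := (hgrow z (ρ - 1) (by omega)).1
          calc C₀⁻¹ * ((ρ - 1 : ℕ) : ℝ) ^ D ≤ ((gball G z (ρ - 1)).ncard : ℝ) := hlow
            _ = (((hballfin z (ρ - 1)).toFinset.card : ℕ) : ℝ) := by
                rw [Set.ncard_eq_toFinset_card _ (hballfin z (ρ - 1))]
            _ ≤ ((hXfin.toFinset.filter fun x => G.dist z x ≤ ρ - 1).card : ℝ) := by
                exact_mod_cast Finset.card_le_card hsub
    -- test functions
    set u₁ : Γ → ℝ := fun v => if v ∈ Ωb then clamp (2 - (G.dist x₁ v : ℝ) / (ρ:ℝ)) else 0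
      with hu₁def
    set u₂ : Γ → ℝ := fun v => if v ∈ Ωb then clamp ((G.dist x₁ v : ℝ) / (ρ:ℝ) - 3) else 0
      with hu₂def
    have hu₁one : ∀ v ∈ Ωb, G.dist x₁ v ≤ ρ → u₁ v = 1 := by
      intro v hv hd
      show (if v ∈ Ωb then clamp (2 - (G.dist x₁ v : ℝ) / (ρ:ℝ)) else 0) = 1
      rw [if_pos hv]
      apply clamp_eq_one
      have hdc : ((G.dist x₁ v : ℕ) : ℝ) ≤ (ρ:ℝ) := by exact_mod_cast hd
      have : (G.dist x₁ v : ℝ) / (ρ:ℝ) ≤ 1 := by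
        rw [div_le_one hρpos]; exact hdc
      linarith
    have hu₁zero : ∀ v : Γ, 2 * ρ ≤ G.dist x₁ v → u₁ v = 0 := by
      intro v hd
      show (if v ∈ Ωb then clamp (2 - (G.dist x₁ v : ℝ) / (ρ:ℝ)) else 0) = 0
      split_ifs with h
      · apply clamp_eq_zero
        have hdc : (2:ℝ) * (ρ:ℝ) ≤ ((G.dist x₁ v : ℕ) : ℝ) := by
          exact_mod_cast hd
        have h2 : (2:ℝ) ≤ (G.dist x₁ v : ℝ) / (ρ:ℝ) := by
          rw [le_div_iff₀ hρpos]; linarith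
        linarith
      · rfl
    have hu₂one : ∀ v ∈ Ωb, 4 * ρ ≤ G.dist x₁ v → u₂ v = 1 := by
      intro v hv hd
      show (if v ∈ Ωb then clamp ((G.dist x₁ v : ℝ) / (ρ:ℝ) - 3) else 0) = 1
      rw [if_pos hv]
      apply clamp_eq_one
      have hdc : (4:ℝ) * (ρ:ℝ) ≤ ((G.dist x₁ v : ℕ) : ℝ) := by exact_mod_cast hd
      have h2 : (4:ℝ) ≤ (G.dist x₁ v : ℝ) / (ρ:ℝ) := by
        rw [le_div_iff₀ hρpos]; linarith
      linarith
    have hu₂zero : ∀ v : Γ, G.dist x₁ v ≤ 3 * ρ → u₂ v = 0 := by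
      intro v hd
      show (if v ∈ Ωb then clamp ((G.dist x₁ v : ℝ) / (ρ:ℝ) - 3) else 0) = 0
      split_ifs with h
      · apply clamp_eq_zero
        have hdc : ((G.dist x₁ v : ℕ) : ℝ) ≤ (3:ℝ) * (ρ:ℝ) := by exact_mod_cast hd
        have h2 : (G.dist x₁ v : ℝ) / (ρ:ℝ) ≤ 3 := by
          rw [div_le_iff₀ hρpos]; linarith
        linarith
      · rfl
    have hmem₁ : u₁ ∈ funcsOn Ωb := by
      rw [mem_funcsOn]
      intro v hv
      show (if v ∈ Ωb then clamp (2 - (G.dist x₁ v : ℝ) / (ρ:ℝ)) else 0) = 0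
      rw [if_neg hv]
    have hmem₂ : u₂ ∈ funcsOn Ωb := by
      rw [mem_funcsOn]
      intro v hv
      show (if v ∈ Ωb then clamp ((G.dist x₁ v : ℝ) / (ρ:ℝ) - 3) else 0) = 0
      rw [if_neg hv]
    have hedge : ∀ e ∈ E', (∀ v ∈ e, u₁ v = 0) ∨ (∀ v ∈ e, u₂ v = 0) := by
      intro e he
      obtain ⟨hedgeE, w, hwΩ, hwe⟩ := he
      induction e using Sym2.ind with
      | _ a b =>
        have hadj : G.Adj a b := hedgeE
        by_cases hsm : G.dist x₁ a ≤ 3 * ρ ∧ G.dist x₁ b ≤ 3 * ρ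
        · right
          intro z hz
          rw [Sym2.mem_iff] at hz
          rcases hz with rfl | rfl
          · exact hu₂zero _ hsm.1
          · exact hu₂zero _ hsm.2
        · left
          push_neg at hsm
          have h1 := adj_dist_succ G hconn hadj x₁
          have h2 := adj_dist_succ G hconn hadj.symm x₁
          have hboth : 2 * ρ ≤ G.dist x₁ a ∧ 2 * ρ ≤ G.dist x₁ b := by
            by_cases hca : G.dist x₁ a ≤ 3 * ρ
            · have := hsm hca; omega
            · omega
          intro z hz
          rw [Sym2.mem_iff] at hz
          rcases hz with rfl | rfl
          · exact hu₁zero _ hboth.1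
          · exact hu₁zero _ hboth.2
    have hbd : ∀ i ∈ B, u₁ i = 0 ∨ u₂ i = 0 := by
      intro i _
      by_cases hd : G.dist x₁ i ≤ 3 * ρ
      · exact Or.inr (hu₂zero i hd)
      · exact Or.inl (hu₁zero i (by omega))
    -- boundary norms
    have hN₁ : (B.ncard : ℝ) / (2 * K) ≤ boundaryNorm B u₁ := by
      rw [boundaryNorm_eq_sum hBfin]
      have hsub : (hνfin x₁ ρ).toFinset ⊆ hBfin.toFinset := by
        intro z hz
        rw [Set.Finite.mem_toFinset] at hz ⊢
        exact hz.1
      calc (B.ncard : ℝ) / (2 * K) ≤ ((B ∩ gball G x₁ ρ).ncard : ℝ) := by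
            rw [div_le_iff₀ (by positivity)]
            nlinarith
        _ = ∑ _i ∈ (hνfin x₁ ρ).toFinset, (1:ℝ) := by
            rw [Finset.sum_const, nsmul_eq_mul, mul_one,
              Set.ncard_eq_toFinset_card _ (hνfin x₁ ρ)]
        _ = ∑ i ∈ (hνfin x₁ ρ).toFinset, u₁ i ^ 2 := by
            apply Finset.sum_congr rfl
            intro i hi
            rw [Set.Finite.mem_toFinset] at hi
            rw [hu₁one i (hBsub hi.1) hi.2]
            norm_num
        _ ≤ ∑ i ∈ hBfin.toFinset, u₁ i ^ 2 :=
            Finset.sum_le_sum_of_subset_of_nonneg hsub (fun i _ _ => sq_nonneg _)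
    have hN₂ : (B.ncard : ℝ) / 2 ≤ boundaryNorm B u₂ := by
      rw [boundaryNorm_eq_sum hBfin]
      have hdfin : (B \ gball G x₁ (4 * ρ)).Finite := hBfin.diff
      have hsub : hdfin.toFinset ⊆ hBfin.toFinset := by
        intro z hz
        rw [Set.Finite.mem_toFinset] at hz ⊢
        exact hz.1
      have hcardsplit := Set.ncard_inter_add_ncard_diff_eq_ncard B (gball G x₁ (4 * ρ)) hBfin
      have hdiffcard : ((B \ gball G x₁ (4 * ρ)).ncard : ℝ) ≥ (B.ncard : ℝ) / 2 := by
        have h1 : ((B ∩ gball G x₁ (4 * ρ)).ncard : ℝ) +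
            ((B \ gball G x₁ (4 * ρ)).ncard : ℝ) = (B.ncard : ℝ) := by
          exact_mod_cast hcardsplit
        have h2 : ((B ∩ gball G x₁ (4 * ρ)).ncard : ℝ) ≤ (B.ncard : ℝ) / 2 := hAcard
        linarith
      calc (B.ncard : ℝ) / 2 ≤ ((B \ gball G x₁ (4 * ρ)).ncard : ℝ) := hdiffcard
        _ = ∑ _i ∈ hdfin.toFinset, (1:ℝ) := by
            rw [Finset.sum_const, nsmul_eq_mul, mul_one,
              Set.ncard_eq_toFinset_card _ hdfin]
        _ = ∑ i ∈ hdfin.toFinset, u₂ i ^ 2 := by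
            apply Finset.sum_congr rfl
            intro i hi
            rw [Set.Finite.mem_toFinset] at hi
            have hd4 : 4 * ρ ≤ G.dist x₁ i := by
              have : ¬ (G.dist x₁ i ≤ 4 * ρ) := hi.2
              omega
            rw [hu₂one i (hBsub hi.1) hd4]
            norm_num
        _ ≤ ∑ i ∈ hBfin.toFinset, u₂ i ^ 2 :=
            Finset.sum_le_sum_of_subset_of_nonneg hsub (fun i _ _ => sq_nonneg _)
    have hN₁pos : 0 < boundaryNorm B u₁ :=
      lt_of_lt_of_le (by positivity) hN₁
    have hN₂pos : 0 < boundaryNorm B u₂ :=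
      lt_of_lt_of_le (by positivity) hN₂
    -- energy bounds
    have hlip : ∀ (u : Γ → ℝ) (f : ℝ → ℝ), (∀ a b : ℝ, |f a - f b| ≤ |a - b|) →
        (∀ v ∈ Ωb, u v = f ((G.dist x₁ v : ℝ) / (ρ:ℝ))) →
        ∀ e ∈ E', edgeEnergy u e ≤ 1 / (ρ:ℝ) ^ 2 := by
      intro u f hf hu e he
      have hez := hends e he
      induction e using Sym2.ind with
      | _ a b =>
        have hadj : G.Adj a b := he.1
        have haΩb : a ∈ Ωb := hez a (Sym2.mem_mk_left a b)
        have hbΩb : b ∈ Ωb := hez b (Sym2.mem_mk_right a b)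
        rw [edgeEnergy_mk, hu a haΩb, hu b hbΩb]
        have h1 := adj_dist_succ G hconn hadj x₁
        have h2 := adj_dist_succ G hconn hadj.symm x₁
        have hda : ((G.dist x₁ b : ℕ) : ℝ) ≤ ((G.dist x₁ a : ℕ) : ℝ) + 1 := by
          exact_mod_cast h1
        have hdb : ((G.dist x₁ a : ℕ) : ℝ) ≤ ((G.dist x₁ b : ℕ) : ℝ) + 1 := by
          exact_mod_cast h2
        have hdiff : |f ((G.dist x₁ a : ℝ) / (ρ:ℝ)) - f ((G.dist x₁ b : ℝ) / (ρ:ℝ))| ≤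
            1 / (ρ:ℝ) := by
          refine le_trans (hf _ _) ?_
          have heq : (G.dist x₁ a : ℝ) / (ρ:ℝ) - (G.dist x₁ b : ℝ) / (ρ:ℝ) =
              ((G.dist x₁ a : ℝ) - (G.dist x₁ b : ℝ)) / (ρ:ℝ) := by ring
          rw [heq, abs_div, abs_of_pos hρpos]
          have habs : |(G.dist x₁ a : ℝ) - (G.dist x₁ b : ℝ)| ≤ 1 := by
            rw [abs_le]
            constructor <;> linarith
          exact div_le_div_of_nonneg_right habs hρpos.le
        calc (f ((G.dist x₁ a : ℝ) / (ρ:ℝ)) - f ((G.dist x₁ b : ℝ) / (ρ:ℝ))) ^ 2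
            = |f ((G.dist x₁ a : ℝ) / (ρ:ℝ)) - f ((G.dist x₁ b : ℝ) / (ρ:ℝ))| ^ 2 :=
              (sq_abs _).symm
          _ ≤ (1 / (ρ:ℝ)) ^ 2 := by
              apply pow_le_pow_left₀ (abs_nonneg _) hdiff
          _ = 1 / (ρ:ℝ) ^ 2 := by rw [div_pow, one_pow]
    have hlip₁ : ∀ e ∈ E', edgeEnergy u₁ e ≤ 1 / (ρ:ℝ) ^ 2 := by
      apply hlip u₁ (fun t => clamp (2 - t))
      · intro a b
        refine le_trans (clamp_lip _ _) ?_
        have : (2 - a) - (2 - b) = -(a - b) := by ring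
        rw [this, abs_neg]
      · intro v hv
        show (if v ∈ Ωb then clamp (2 - (G.dist x₁ v : ℝ) / (ρ:ℝ)) else 0) = _
        rw [if_pos hv]
    have hlip₂ : ∀ e ∈ E', edgeEnergy u₂ e ≤ 1 / (ρ:ℝ) ^ 2 := by
      apply hlip u₂ (fun t => clamp (t - 3))
      · intro a b
        refine le_trans (clamp_lip _ _) ?_
        have : (a - 3) - (b - 3) = a - b := by ring
        rw [this]
      · intro v hv
        show (if v ∈ Ωb then clamp ((G.dist x₁ v : ℝ) / (ρ:ℝ) - 3) else 0) = _
        rw [if_pos hv]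
    have hzero₁ : ∀ e ∈ E', (∀ v ∈ e, v ∉ Ω ∩ gball G x₁ (2 * ρ + 1)) →
        edgeEnergy u₁ e = 0 := by
      intro e he hnot
      obtain ⟨hedgeE, w, hwΩ, hwe⟩ := he
      induction e using Sym2.ind with
      | _ a b =>
        have hadj : G.Adj a b := hedgeE
        have hwd : 2 * ρ + 2 ≤ G.dist x₁ w := by
          by_contra h
          push_neg at h
          exact hnot w hwe ⟨hwΩ, by show G.dist x₁ w ≤ 2 * ρ + 1; omega⟩
        have h1 := adj_dist_succ G hconn hadj x₁
        have h2 := adj_dist_succ G hconn hadj.symm x₁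
        rw [Sym2.mem_iff] at hwe
        have hda : 2 * ρ ≤ G.dist x₁ a ∧ 2 * ρ ≤ G.dist x₁ b := by
          rcases hwe with rfl | rfl <;> omega
        rw [edgeEnergy_mk, hu₁zero a hda.1, hu₁zero b hda.2]
        ring
    have hzero₂ : ∀ e ∈ E', (∀ v ∈ e, v ∉ Ω ∩ gball G x₁ (4 * ρ + 1)) →
        edgeEnergy u₂ e = 0 := by
      intro e he hnot
      have hez := hends e he
      obtain ⟨hedgeE, w, hwΩ, hwe⟩ := he
      induction e using Sym2.ind with
      | _ a b =>
        have hadj : G.Adj a b := hedgeE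
        have hwd : 4 * ρ + 2 ≤ G.dist x₁ w := by
          by_contra h
          push_neg at h
          exact hnot w hwe ⟨hwΩ, by show G.dist x₁ w ≤ 4 * ρ + 1; omega⟩
        have h1 := adj_dist_succ G hconn hadj x₁
        have h2 := adj_dist_succ G hconn hadj.symm x₁
        have haΩb : a ∈ Ωb := hez a (Sym2.mem_mk_left a b)
        have hbΩb : b ∈ Ωb := hez b (Sym2.mem_mk_right a b)
        rw [Sym2.mem_iff] at hwe
        have hda : 4 * ρ ≤ G.dist x₁ a ∧ 4 * ρ ≤ G.dist x₁ b := by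
          rcases hwe with rfl | rfl <;> omega
        rw [edgeEnergy_mk, hu₂one a haΩb hda.1, hu₂one b hbΩb hda.2]
        ring
    have hEn₁ : energy E' u₁ ≤
        (Δ:ℝ) * ((Ω ∩ gball G x₁ (2 * ρ + 1)).ncard : ℝ) * (1 / (ρ:ℝ) ^ 2) :=
      energy_le_count G Δ hnbr' Ω (Ω ∩ gball G x₁ (2 * ρ + 1)) (hΩfin.inter_of_left _)
        hE'fin u₁ (1 / (ρ:ℝ) ^ 2) (by positivity) hlip₁ hzero₁
    have hEn₂ : energy E' u₂ ≤
        (Δ:ℝ) * ((Ω ∩ gball G x₁ (4 * ρ + 1)).ncard : ℝ) * (1 / (ρ:ℝ) ^ 2) :=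
      energy_le_count G Δ hnbr' Ω (Ω ∩ gball G x₁ (4 * ρ + 1)) (hΩfin.inter_of_left _)
        hE'fin u₂ (1 / (ρ:ℝ) ^ 2) (by positivity) hlip₂ hzero₂
    have hcount : ∀ m : ℕ, m ≤ 5 * ρ →
        ((Ω ∩ gball G x₁ m).ncard : ℝ) ≤ min ((Ω.ncard : ℝ)) (C₀ * ((5 * ρ : ℕ) : ℝ) ^ D) := by
      intro m hm
      apply le_min
      · exact_mod_cast Set.ncard_le_ncard Set.inter_subset_left hΩfin
      · have hsub5 : Ω ∩ gball G x₁ m ⊆ gball G x₁ (5 * ρ) :=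
          Set.Subset.trans Set.inter_subset_right (gball_mono G x₁ hm)
        calc ((Ω ∩ gball G x₁ m).ncard : ℝ) ≤ ((gball G x₁ (5 * ρ)).ncard : ℝ) := by
              exact_mod_cast Set.ncard_le_ncard hsub5 (hballfin _ _)
          _ ≤ C₀ * ((5 * ρ : ℕ) : ℝ) ^ D := (hgrow x₁ (5 * ρ) (by omega)).2
    -- key arithmetic bound
    have hA : (Δ:ℝ) * min ((Ω.ncard : ℝ)) (C₀ * ((5 * ρ : ℕ) : ℝ) ^ D) * (1 / (ρ:ℝ) ^ 2) ≤
        C * Mn / (2 * K) := by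
      have hsplit : ((5 * ρ : ℕ) : ℝ) ^ D = 5 ^ D * (ρ:ℝ) ^ D := by
        push_cast
        rw [mul_pow]
      have hm1 : min ((Ω.ncard : ℝ)) (C₀ * ((5 * ρ : ℕ) : ℝ) ^ D) ≤
          C₀ * 5 ^ D * min ((Ω.ncard : ℝ)) ((ρ:ℝ) ^ D) := by
        have hc5 : (1:ℝ) ≤ C₀ * 5 ^ D := by
          calc (1:ℝ) = 1 * 1 := by ring
            _ ≤ C₀ * 5 ^ D := mul_le_mul hC₀ h5D zero_le_one hC₀pos.le
        rcases le_total ((Ω.ncard : ℝ)) ((ρ:ℝ) ^ D) with h | h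
        · rw [min_eq_left h]
          calc min ((Ω.ncard : ℝ)) (C₀ * ((5 * ρ : ℕ) : ℝ) ^ D) ≤ (Ω.ncard : ℝ) :=
              min_le_left _ _
            _ = 1 * (Ω.ncard : ℝ) := by ring
            _ ≤ C₀ * 5 ^ D * (Ω.ncard : ℝ) := by
                apply mul_le_mul_of_nonneg_right hc5 (by positivity)
        · rw [min_eq_right h]
          calc min ((Ω.ncard : ℝ)) (C₀ * ((5 * ρ : ℕ) : ℝ) ^ D) ≤
              C₀ * ((5 * ρ : ℕ) : ℝ) ^ D := min_le_right _ _
            _ = C₀ * 5 ^ D * (ρ:ℝ) ^ D := by rw [hsplit]; ring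
      have hm2 : min ((Ω.ncard : ℝ)) ((ρ:ℝ) ^ D) * (1 / (ρ:ℝ) ^ 2) ≤ Mn := by
        have h := min_div_le_M D Ω.ncard ρ hD hn1 hρ1
        rw [mul_one_div]
        exact h
      have hDC5 : (Δ:ℝ) * (C₀ * 5 ^ D) ≤ C / (2 * K) := by
        rw [hCK]
        have hd0 : (0:ℝ) ≤ (Δ:ℝ) := Nat.cast_nonneg Δ
        nlinarith [mul_le_mul_of_nonneg_right (by nlinarith : (Δ:ℝ) ≤ 2*((Δ:ℝ)+1)^2)
          (by positivity : (0:ℝ) ≤ C₀ * 5 ^ D)]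
      calc (Δ:ℝ) * min ((Ω.ncard : ℝ)) (C₀ * ((5 * ρ : ℕ) : ℝ) ^ D) * (1 / (ρ:ℝ) ^ 2)
          ≤ (Δ:ℝ) * (C₀ * 5 ^ D * min ((Ω.ncard : ℝ)) ((ρ:ℝ) ^ D)) * (1 / (ρ:ℝ) ^ 2) := by
            apply mul_le_mul_of_nonneg_right _ (by positivity)
            apply mul_le_mul_of_nonneg_left hm1 (Nat.cast_nonneg Δ)
        _ = ((Δ:ℝ) * (C₀ * 5 ^ D)) * (min ((Ω.ncard : ℝ)) ((ρ:ℝ) ^ D) * (1 / (ρ:ℝ) ^ 2)) := by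
            ring
        _ ≤ ((Δ:ℝ) * (C₀ * 5 ^ D)) * Mn := by
            apply mul_le_mul_of_nonneg_left hm2 (by positivity)
        _ ≤ C / (2 * K) * Mn := by
            apply mul_le_mul_of_nonneg_right hDC5 hMn0
        _ = C * Mn / (2 * K) := by ring
    -- put everything together
    have hfact : C * Mn / (2 * K) = (C * Mn / (B.ncard : ℝ)) * ((B.ncard : ℝ) / (2 * K)) := by
      field_simp
    apply steklov_le_of_pair E' Ωb B hE'fin hBfin u₁ u₂ _ hR0 hmem₁ hmem₂ hedge hbd
      hN₁pos hN₂pos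
    · calc energy E' u₁
          ≤ (Δ:ℝ) * ((Ω ∩ gball G x₁ (2 * ρ + 1)).ncard : ℝ) * (1 / (ρ:ℝ) ^ 2) := hEn₁
        _ ≤ (Δ:ℝ) * min ((Ω.ncard : ℝ)) (C₀ * ((5 * ρ : ℕ) : ℝ) ^ D) * (1 / (ρ:ℝ) ^ 2) := by
            apply mul_le_mul_of_nonneg_right _ (by positivity)
            apply mul_le_mul_of_nonneg_left (hcount (2 * ρ + 1) (by omega)) (Nat.cast_nonneg Δ)
        _ ≤ C * Mn / (2 * K) := hA
        _ = (C * Mn / (B.ncard : ℝ)) * ((B.ncard : ℝ) / (2 * K)) := hfact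
        _ ≤ (C * Mn / (B.ncard : ℝ)) * boundaryNorm B u₁ :=
            mul_le_mul_of_nonneg_left hN₁ hR0
    · calc energy E' u₂
          ≤ (Δ:ℝ) * ((Ω ∩ gball G x₁ (4 * ρ + 1)).ncard : ℝ) * (1 / (ρ:ℝ) ^ 2) := hEn₂
        _ ≤ (Δ:ℝ) * min ((Ω.ncard : ℝ)) (C₀ * ((5 * ρ : ℕ) : ℝ) ^ D) * (1 / (ρ:ℝ) ^ 2) := by
            apply mul_le_mul_of_nonneg_right _ (by positivity)
            apply mul_le_mul_of_nonneg_left (hcount (4 * ρ + 1) (by omega)) (Nat.cast_nonneg Δ)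
        _ ≤ C * Mn / (2 * K) := hA
        _ = (C * Mn / (B.ncard : ℝ)) * ((B.ncard : ℝ) / (2 * K)) := hfact
        _ ≤ (C * Mn / (B.ncard : ℝ)) * ((B.ncard : ℝ) / 2) := by
            apply mul_le_mul_of_nonneg_left _ hR0
            exact div_le_div_of_nonneg_left hbpos.le (by norm_num) (by linarith)
        _ ≤ (C * Mn / (B.ncard : ℝ)) * boundaryNorm B u₂ :=
            mul_le_mul_of_nonneg_left hN₂ hR0

end PerrinProof
/-- Perrin's upper bound for the first Steklov eigenvalue of subgraphs of a
Cayley graph of polynomial growth of order `D`. -/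
theorem perrin_cayley_upper_bound
    {Γ : Type*} [Group Γ] (S : Finset Γ)
    (hS : ∀ s ∈ S, s⁻¹ ∈ S) (h1 : (1 : Γ) ∉ S)
    (hgen : Subgroup.closure (S : Set Γ) = ⊤)
    (D : ℕ) (hD : 1 ≤ D) (C₀ : ℝ) (hC₀ : 1 ≤ C₀)
    (hgrowth : ∀ (x : Γ) (N : ℕ), 1 ≤ N →
      C₀⁻¹ * (N : ℝ) ^ D ≤ ({y : Γ | (cayleyGraph S hS h1).dist x y ≤ N}.ncard : ℝ) ∧
        ({y : Γ | (cayleyGraph S hS h1).dist x y ≤ N}.ncard : ℝ) ≤ C₀ * (N : ℝ) ^ D) :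
    ∃ C : ℝ, 0 < C ∧
      ∀ Ω : Set Γ, Ω.Finite → Ω.Nonempty →
        ((cayleyGraph S hS h1).induce Ω).Connected →
        (D ≤ 2 →
          steklov (incidentEdges (cayleyGraph S hS h1) Ω)
              (Ω ∪ vertexBoundary (cayleyGraph S hS h1) Ω)
              (vertexBoundary (cayleyGraph S hS h1) Ω) 1 ≤
            C / ((vertexBoundary (cayleyGraph S hS h1) Ω).ncard : ℝ)) ∧
        (2 < D →
          steklov (incidentEdges (cayleyGraph S hS h1) Ω)
              (Ω ∪ vertexBoundary (cayleyGraph S hS h1) Ω)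
              (vertexBoundary (cayleyGraph S hS h1) Ω) 1 ≤
            C * (Ω.ncard : ℝ) ^ (((D : ℝ) - 2) / (D : ℝ)) /
              ((vertexBoundary (cayleyGraph S hS h1) Ω).ncard : ℝ)) := by
  classical
  have hconn : (cayleyGraph S hS h1).Connected := PerrinProof.cayley_connected S hS h1 hgen
  have hgrow' : ∀ (x : Γ) (N : ℕ), 1 ≤ N →
      C₀⁻¹ * (N : ℝ) ^ D ≤ ((PerrinProof.gball (cayleyGraph S hS h1) x N).ncard : ℝ) ∧
        ((PerrinProof.gball (cayleyGraph S hS h1) x N).ncard : ℝ) ≤ C₀ * (N : ℝ) ^ D := by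
    intro x N hN
    exact hgrowth x N hN
  refine ⟨4 * ((S.card : ℝ) + 1) ^ 2 * C₀ ^ 3 * 10 ^ D * 5 ^ D, by positivity, ?_⟩
  intro Ω hfin hne _hconnΩ
  have hmain := PerrinProof.main_estimate (cayleyGraph S hS h1) hconn S.card
    (PerrinProof.cayley_nbr_finset S hS h1) D hD C₀ hC₀ hgrow' Ω hfin hne
  have hbase : (1:ℝ) ≤ (Ω.ncard : ℝ) := by
    have := (Set.ncard_pos hfin).mpr hne
    exact_mod_cast this
  have hDpos : (0:ℝ) < (D:ℝ) := by
    have : (0:ℕ) < D := hD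
    exact_mod_cast this
  constructor
  · intro hD2
    have hexp : ((D:ℝ) - 2) / (D:ℝ) ≤ 0 := by
      apply div_nonpos_of_nonpos_of_nonneg
      · have : (D:ℝ) ≤ 2 := by exact_mod_cast hD2
        linarith
      · exact hDpos.le
    have hM : max 1 ((Ω.ncard : ℝ) ^ (((D:ℝ) - 2) / (D:ℝ))) = 1 :=
      max_eq_left (Real.rpow_le_one_of_one_le_of_nonpos hbase hexp)
    rw [hM, mul_one] at hmain
    exact hmain
  · intro hD2
    have hexp : 0 ≤ ((D:ℝ) - 2) / (D:ℝ) := by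
      apply div_nonneg
      · have : (2:ℝ) < (D:ℝ) := by exact_mod_cast hD2
        linarith
      · exact hDpos.le
    have hM : max 1 ((Ω.ncard : ℝ) ^ (((D:ℝ) - 2) / (D:ℝ))) =
        (Ω.ncard : ℝ) ^ (((D:ℝ) - 2) / (D:ℝ)) :=
      max_eq_right (Real.one_le_rpow hbase hexp)
    rw [hM] at hmain
    exact hmain
end

section
/- (Isoperimetric lower bound on the vertex boundary in Cayley graphs of polynomial growth.) Let G be the Cayley graph of a group with finite symmetric generating set S (1∉S), and suppose G has polynomial growth of order D for some integer D ≥ 2. Then there exists a constant C > 0, depending only on G, such that every nonempty finite connected set of vertices Ω satisfies |δΩ| ≥ C·|Ω|^{(D−1)/D}, where δΩ = {i∉Ω : i is adjacent to some vertex of Ω} is the vertex boundary of Ω. -/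
open DiscreteSteklov

set_option maxHeartbeats 2000000

section Aux
variable {Γ : Type*} [Group Γ] (S : Finset Γ)
  (hS : ∀ s ∈ S, s⁻¹ ∈ S) (h1 : (1 : Γ) ∉ S)

lemma cayley_adj {x y : Γ} : (cayleyGraph S hS h1).Adj x y ↔ x⁻¹ * y ∈ S := Iff.rfl

def cayleyMulHom (a : Γ) : cayleyGraph S hS h1 →g cayleyGraph S hS h1 where
  toFun x := a * x
  map_rel' := by
    intro x y h
    show (a*x)⁻¹ * (a*y) ∈ S
    rwa [mul_inv_rev, mul_assoc, inv_mul_cancel_left]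

@[simp] lemma cayleyMulHom_apply (a x : Γ) : cayleyMulHom S hS h1 a x = a * x := rfl

lemma cayley_reachable_one (hgen : Subgroup.closure (S : Set Γ) = ⊤) (g : Γ) :
    (cayleyGraph S hS h1).Reachable 1 g := by
  have hg : g ∈ Subgroup.closure (S : Set Γ) := by rw [hgen]; trivial
  refine Subgroup.closure_induction
    (p := fun x _ => (cayleyGraph S hS h1).Reachable 1 x) ?_ ?_ ?_ ?_ hg
  · intro s hs
    exact SimpleGraph.Adj.reachable (show (1:Γ)⁻¹ * s ∈ S by simpa using hs)
  · rfl
  · intro x y _ _ hx hy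
    refine hx.trans ?_
    have := hy.map (cayleyMulHom S hS h1 x)
    simpa using this
  · intro x _ hx
    have := (hx.map (cayleyMulHom S hS h1 x⁻¹)).symm
    simpa using this

lemma exists_crossing {P : ℕ → Prop} [DecidablePred P] :
    ∀ {N}, P 0 → ¬ P N → ∃ i < N, P i ∧ ¬ P (i+1) := by
  intro N
  induction N with
  | zero => intro h0 hN; exact absurd h0 hN
  | succ n ih =>
    intro h0 hN
    by_cases h : P n
    · exact ⟨n, Nat.lt_succ_self n, h, hN⟩
    · obtain ⟨i, hi, h'⟩ := ih h0 h
      exact ⟨i, hi.trans (Nat.lt_succ_self n), h'⟩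

end Aux

/-- Isoperimetric lower bound on the vertex boundary in Cayley graphs of
polynomial growth of order `D ≥ 2`: `|δΩ| ≥ C · |Ω|^{(D−1)/D}`. -/
theorem cayley_vertex_isoperimetry
    {Γ : Type*} [Group Γ] (S : Finset Γ)
    (hS : ∀ s ∈ S, s⁻¹ ∈ S) (h1 : (1 : Γ) ∉ S)
    (hgen : Subgroup.closure (S : Set Γ) = ⊤)
    (D : ℕ) (hD : 2 ≤ D) (C₀ : ℝ) (hC₀ : 1 ≤ C₀)
    (hgrowth : ∀ (x : Γ) (N : ℕ), 1 ≤ N →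
      C₀⁻¹ * (N : ℝ) ^ D ≤ ({y : Γ | (cayleyGraph S hS h1).dist x y ≤ N}.ncard : ℝ) ∧
        ({y : Γ | (cayleyGraph S hS h1).dist x y ≤ N}.ncard : ℝ) ≤ C₀ * (N : ℝ) ^ D) :
    ∃ C : ℝ, 0 < C ∧
      ∀ Ω : Set Γ, Ω.Finite → Ω.Nonempty →
        ((cayleyGraph S hS h1).induce Ω).Connected →
        C * (Ω.ncard : ℝ) ^ (((D : ℝ) - 1) / (D : ℝ)) ≤
          ((vertexBoundary (cayleyGraph S hS h1) Ω).ncard : ℝ) := by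
  classical
  set G := cayleyGraph S hS h1 with hGdef
  have hC₀0 : (0:ℝ) < C₀ := by linarith
  have hDR : (0:ℝ) < (D:ℝ) := by
    have : 0 < D := by omega
    exact_mod_cast this
  have h2C : (0:ℝ) < (2*C₀) ^ ((1:ℝ)/D) := Real.rpow_pos_of_pos (by linarith) _
  refine ⟨(4 * (2*C₀) ^ ((1:ℝ)/D))⁻¹, by positivity, ?_⟩
  intro Ω hfin hne _
  -- the vertex boundary is finite
  have hδfin : (vertexBoundary G Ω).Finite := by
    apply Set.Finite.subset (Set.Finite.image2 (fun a b => a * b) hfin S.finite_toSet)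
    rintro i ⟨hiΩ, j, hj, hadj⟩
    exact ⟨j, hj, j⁻¹ * i, hadj, by group⟩
  set ΩF := hfin.toFinset with hΩF
  set n := ΩF.card with hn
  have hmemΩF : ∀ x : Γ, x ∈ ΩF ↔ x ∈ Ω := fun x => hfin.mem_toFinset
  have hn1 : 1 ≤ n := Finset.card_pos.mpr (by rwa [hfin.toFinset_nonempty])
  have hn0 : (0:ℝ) < n := by exact_mod_cast hn1
  set r : ℝ := (2*C₀*n) ^ ((1:ℝ)/D) with hr
  have hr1 : (1:ℝ) ≤ r := Real.one_le_rpow (by nlinarith [hn0, hC₀0, mul_le_mul_of_nonneg_left (show (1:ℝ) ≤ (n:ℝ) from by exact_mod_cast hn1) (show (0:ℝ) ≤ 2*C₀ by linarith)]) (by positivity)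
  set N := ⌈r⌉₊ with hNdef
  have hN1 : 1 ≤ N := by
    rw [hNdef]
    exact_mod_cast Nat.one_le_ceil_iff.mpr (by linarith)
  have hN0 : (0:ℝ) < N := by exact_mod_cast hN1
  have hrN : r ≤ (N:ℝ) := Nat.le_ceil r
  have hN2r : (N:ℝ) ≤ 2*r := by
    have := Nat.ceil_lt_add_one (show (0:ℝ) ≤ r by linarith)
    rw [← hNdef] at this
    linarith
  have hNpow : 2*C₀*n ≤ (N:ℝ)^D := by
    have h0 : (0:ℝ) ≤ 2*C₀*n := by positivity
    calc 2*C₀*(n:ℝ) = ((2*C₀*n) ^ ((1:ℝ)/D)) ^ (D:ℕ) := by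
          rw [← Real.rpow_natCast ((2*C₀*n) ^ ((1:ℝ)/D)) D, ← Real.rpow_mul h0,
            one_div, inv_mul_cancel₀ (ne_of_gt hDR), Real.rpow_one]
      _ ≤ (N:ℝ)^D := by
          apply pow_le_pow_left₀ (by positivity)
          rw [← hr]; exact hrN
  -- the ball of radius N is finite
  have hballfin : {y : Γ | G.dist 1 y ≤ N}.Finite := by
    by_contra h
    have h2 := (hgrowth 1 N hN1).1
    rw [Set.Infinite.ncard h] at h2
    have : (0:ℝ) < C₀⁻¹ * (N:ℝ)^D := by positivity
    simp at h2
    linarith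
  set BF := hballfin.toFinset with hBF
  set b := BF.card with hb
  have hmemBF : ∀ g : Γ, g ∈ BF ↔ G.dist 1 g ≤ N := fun g => by
    rw [hBF, hballfin.mem_toFinset]; rfl
  have hbn : 2 * (n:ℝ) ≤ b := by
    have h2 := (hgrowth 1 N hN1).1
    have hbeq : {y : Γ | G.dist 1 y ≤ N}.ncard = b := by
      rw [hb, hBF, Set.ncard_eq_toFinset_card _ hballfin]
    calc 2*(n:ℝ) = C₀⁻¹ * (2*C₀*n) := by field_simp
      _ ≤ C₀⁻¹ * (N:ℝ)^D := by
          apply mul_le_mul_of_nonneg_left hNpow (by positivity)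
      _ ≤ ({y : Γ | G.dist 1 y ≤ N}.ncard : ℝ) := h2
      _ = b := by rw [hbeq]
  have hb0 : (0:ℝ) < b := by linarith
  set δF := hδfin.toFinset with hδF
  set δc := δF.card with hδc
  -- crossing bound: for each g in the ball, few x ∈ Ω have x*g outside Ω
  have key1 : ∀ g ∈ BF, (ΩF.filter fun x => x*g ∉ Ω).card ≤ N * δc := by
    intro g hg
    obtain ⟨p, hp⟩ := (cayley_reachable_one S hS h1 hgen g).exists_walk_length_eq_dist
    have hplen : p.length ≤ N := by rw [hp]; exact (hmemBF g).mp hg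
    have hsub : (ΩF.filter fun x => x*g ∉ Ω) ⊆ (Finset.range N).biUnion
        (fun i => ΩF.filter (fun x => x * p.getVert i ∈ Ω ∧ x * p.getVert (i+1) ∉ Ω)) := by
      intro x hx
      rw [Finset.mem_filter] at hx
      obtain ⟨hxΩ, hxg⟩ := hx
      have h0 : x * p.getVert 0 ∈ Ω := by
        rw [p.getVert_zero, mul_one]; exact (hmemΩF x).mp hxΩ
      have hNg : ¬ (x * p.getVert N ∈ Ω) := by
        rw [p.getVert_of_length_le hplen]; exact hxg
      obtain ⟨i, hiN, hPi, hPi1⟩ :=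
        exists_crossing (P := fun i => x * p.getVert i ∈ Ω) h0 hNg
      refine Finset.mem_biUnion.mpr ⟨i, Finset.mem_range.mpr hiN, ?_⟩
      exact Finset.mem_filter.mpr ⟨hxΩ, hPi, hPi1⟩
    calc (ΩF.filter fun x => x*g ∉ Ω).card
        ≤ ((Finset.range N).biUnion
            (fun i => ΩF.filter (fun x => x * p.getVert i ∈ Ω ∧ x * p.getVert (i+1) ∉ Ω))).card :=
          Finset.card_le_card hsub
      _ ≤ ∑ i ∈ Finset.range N,
            (ΩF.filter (fun x => x * p.getVert i ∈ Ω ∧ x * p.getVert (i+1) ∉ Ω)).card :=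
          Finset.card_biUnion_le
      _ ≤ ∑ _i ∈ Finset.range N, δc := by
          apply Finset.sum_le_sum
          intro i _
          by_cases hi : i < p.length
          · apply Finset.card_le_card_of_injOn (fun x => x * p.getVert (i+1))
            · intro x hx
              rw [Finset.mem_coe, Finset.mem_filter] at hx
              obtain ⟨-, hxi, hxi1⟩ := hx
              rw [Finset.mem_coe, hδF, hδfin.mem_toFinset]
              refine ⟨hxi1, x * p.getVert i, hxi, ?_⟩
              have := p.adj_getVert_succ hi
              rw [cayley_adj] at this ⊢
              rwa [mul_inv_rev, mul_assoc, inv_mul_cancel_left]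
            · exact Set.injOn_of_injective (mul_left_injective _)
          · have hempty : (ΩF.filter (fun x => x * p.getVert i ∈ Ω ∧ x * p.getVert (i+1) ∉ Ω)) = ∅ := by
              apply Finset.filter_false_of_mem
              intro x _
              rw [p.getVert_of_length_le (Nat.le_of_not_lt hi),
                p.getVert_of_length_le (Nat.le_succ_of_le (Nat.le_of_not_lt hi))]
              rintro ⟨h', h''⟩
              exact h'' h'
            rw [hempty]
            simp
      _ = N * δc := by simp [Finset.sum_const, Finset.card_range]
  -- double counting
  have hswap : ∑ g ∈ BF, (ΩF.filter fun x => x*g ∉ Ω).card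
      = ∑ x ∈ ΩF, (BF.filter fun g => x*g ∉ Ω).card := by
    simp only [Finset.card_filter]
    rw [Finset.sum_comm]
  have key3 : ∀ x ∈ ΩF, b ≤ (BF.filter fun g => x*g ∉ Ω).card + n := by
    intro x hx
    have h1' : (BF.filter fun g => x*g ∈ Ω).card ≤ n := by
      apply Finset.card_le_card_of_injOn (fun g => x*g)
      · intro g hg
        rw [Finset.mem_coe, Finset.mem_filter] at hg
        exact Finset.mem_coe.mpr ((hmemΩF _).mpr hg.2)
      · exact Set.injOn_of_injective (mul_right_injective _)
    have h2' := Finset.card_filter_add_card_filter_not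
      (s := BF) (p := fun g => x*g ∈ Ω)
    omega
  -- combine counts: n * b ≤ b * (N * δc) + n * n  (in ℕ)
  have hcount : n * b ≤ b * (N * δc) + n * n := by
    calc n * b = ∑ _x ∈ ΩF, b := by rw [Finset.sum_const, smul_eq_mul]
      _ ≤ ∑ x ∈ ΩF, ((BF.filter fun g => x*g ∉ Ω).card + n) := Finset.sum_le_sum key3
      _ = (∑ x ∈ ΩF, (BF.filter fun g => x*g ∉ Ω).card) + n * n := by
          rw [Finset.sum_add_distrib, Finset.sum_const, smul_eq_mul]
      _ = (∑ g ∈ BF, (ΩF.filter fun x => x*g ∉ Ω).card) + n * n := by rw [hswap]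
      _ ≤ (∑ _g ∈ BF, N * δc) + n * n := by
          gcongr with g hg
          exact key1 g hg
      _ = b * (N * δc) + n * n := by rw [Finset.sum_const, smul_eq_mul]
  -- deduce n ≤ 2 N δc in ℝ
  have hcountR : (n:ℝ) * b ≤ b * (N * δc) + n * n := by exact_mod_cast hcount
  have hmain : (n:ℝ) ≤ 2 * N * δc := by
    nlinarith [mul_le_mul_of_nonneg_left hbn hn0.le, hb0, hn0]
  -- final computation
  have hδeq : ((vertexBoundary G Ω).ncard : ℝ) = δc := by
    rw [hδc, hδF, Set.ncard_eq_toFinset_card _ hδfin]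
  have hΩeq : (Ω.ncard : ℝ) = n := by
    rw [hn, hΩF, Set.ncard_eq_toFinset_card _ hfin]
  rw [hδeq, hΩeq]
  have hnd : (0:ℝ) < (n:ℝ) ^ ((1:ℝ)/D) := Real.rpow_pos_of_pos hn0 _
  have hrfac : r = (2*C₀) ^ ((1:ℝ)/D) * (n:ℝ) ^ ((1:ℝ)/D) := by
    rw [hr, Real.mul_rpow (by positivity) hn0.le]
  have hexp : ((D:ℝ) - 1)/D = 1 - 1/(D:ℝ) := by field_simp
  have hpoweq : (n:ℝ) ^ (((D:ℝ) - 1)/D) = (n:ℝ) / (n:ℝ) ^ ((1:ℝ)/D) := by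
    rw [hexp, Real.rpow_sub hn0, Real.rpow_one, one_div]
  have hδc0 : (0:ℝ) ≤ δc := Nat.cast_nonneg _
  have h4 : (n:ℝ) ≤ 4 * ((2*C₀) ^ ((1:ℝ)/D) * (n:ℝ) ^ ((1:ℝ)/D)) * δc := by
    rw [← hrfac]
    nlinarith [hmain, hN2r, hδc0]
  rw [hpoweq, inv_mul_le_iff₀ (by positivity), div_le_iff₀ hnd]
  linarith [h4]
end
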